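/- arXiv:1204.4242 — 7 statements merged into one kernel-verified Lean document; each statement's English description precedes it below -/
import Mathlib

section
/- Let p be an odd prime and let M(p) be the modular group of order p^3. Then the automorphism group of M(p) has order (p-1)·p^3. -/
/-!
For an odd prime `p`, the modular group `M(p)` of order `p^3` is the semidirect product
`ZMod (p^2) ⋊ ZMod p`, where the generator of `ZMod p` acts on `ZMod (p^2)` by
multiplication by the unit `1 + p`.
-/

namespace ModularP

/-- The unit `1 + p` of `ZMod (p^2)`. -/
def u (p : ℕ) : (ZMod (p ^ 2))ˣ :=
  ZMod.unitOfCoprime (1 + p) (by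
    simpa [Nat.add_comm] using (Nat.coprime_succ_self p).pow_right 2)

lemma pmul (p : ℕ) : ((p : ZMod (p ^ 2)) * p) = 0 := by
  have h : (((p * p : ℕ)) : ZMod (p ^ 2)) = 0 := by
    rw [← pow_two]; exact ZMod.natCast_self _
  push_cast at h
  exact h

lemma one_add_sq_zero_pow {R : Type*} [CommRing R] (x : R) (hx : x * x = 0) (n : ℕ) :
    (1 + x) ^ n = 1 + (n : R) * x := by
  induction n with
  | zero => simp
  | succ n ih =>
      have key : (1 + (n : R) * x) * (1 + x) = 1 + ((n : R) + 1) * x + (n : R) * (x * x) := by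
        ring
      rw [pow_succ, ih, key, hx, mul_zero, add_zero]
      push_cast
      ring

/-- The unit `1 + p` has multiplicative order dividing `p` in `(ZMod (p^2))ˣ`. -/
lemma u_pow (p : ℕ) : u p ^ p = 1 := by
  ext
  have hc : (u p : ZMod (p ^ 2)) = 1 + p := by simp [u]
  rw [Units.val_pow_eq_pow_val, hc, one_add_sq_zero_pow _ (pmul p), pmul, add_zero,
    Units.val_one]

/-- Units of `ZMod n` acting as multiplicative automorphisms of `Multiplicative (ZMod n)`. -/
def unitsToMulAut (n : ℕ) : (ZMod n)ˣ →* MulAut (Multiplicative (ZMod n)) where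
  toFun c := AddEquiv.toMultiplicative (DistribMulAction.toAddAut (ZMod n)ˣ (ZMod n) c)
  map_one' := by ext x; simp
  map_mul' c d := by ext x; simp [mul_smul]

/-- The action of `ZMod p` on `ZMod (p^2)` in which `k` acts by multiplication
by `(1+p)^k`. -/
def actionHom (p : ℕ) : Multiplicative (ZMod p) →* MulAut (Multiplicative (ZMod (p ^ 2))) :=
  AddMonoidHom.toMultiplicativeLeft
    (ZMod.lift p ⟨zmultiplesHom _ (Additive.ofMul (unitsToMulAut (p ^ 2) (u p))), by
      show (p : ℤ) • Additive.ofMul (unitsToMulAut (p ^ 2) (u p)) = 0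
      rw [← ofMul_zpow, zpow_natCast, ← map_pow, u_pow, map_one]
      rfl⟩)

/-- The modular group `M(p)` of order `p^3`:  the semidirect product
`(ZMod (p^2)) ⋊ (ZMod p)` where the generator of `ZMod p` acts on `ZMod (p^2)` by
multiplication by `1 + p`; equivalently `⟨a, b | a^(p^2) = 1, b^p = 1, b a b⁻¹ = a^(1+p)⟩`. -/
abbrev M (p : ℕ) : Type :=
  SemidirectProduct (Multiplicative (ZMod (p ^ 2))) (Multiplicative (ZMod p)) (actionHom p)

end ModularP

/-!
Write elements of `M(p)` as pairs `(m, k)`, so that `(m, k) (m', k') = (m + (1 + p k) m', k + k')`;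
for odd `p` this gives `(m, k) ^ p = (p m, 0)`. A homomorphism out of `M(p)` is the same as a
pair `x, y` with `x ^ (p^2) = 1`, `y ^ p = 1` and `y x = x ^ (1 + p) y`. For an automorphism,
`x ^ p ≠ 1` forces `x = (w, r)` with `w` a unit, `y ^ p = 1` forces `y = (p s, l)`, and the
relation then forces `l = 1`. Conversely every such triple `(w, r, s)` defines an injective, hence
bijective, endomorphism, so `Aut M(p) ≃ (ZMod p²)ˣ × ZMod p × ZMod p`, of order
`p (p - 1) · p · p`.
-/

open Multiplicative

section ZModPowHom

variable {H : Type*} [Group H] {n : ℕ} (x : H) (hx : x ^ n = 1)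

def zmodPowHom : Multiplicative (ZMod n) →* H :=
  AddMonoidHom.toMultiplicativeLeft <|
    ZMod.lift n ⟨zmultiplesHom (Additive H) (Additive.ofMul x), by
      rw [zmultiplesHom_apply, natCast_zsmul, ← ofMul_pow, hx, ofMul_one]⟩

lemma zmodPowHom_ofAdd_natCast (t : ℕ) : zmodPowHom x hx (ofAdd (t : ZMod n)) = x ^ t := by
  rw [← Int.cast_natCast]
  show Additive.toMul (ZMod.lift n _ ((t : ℤ) : ZMod n)) = _
  rw [ZMod.lift_coe, zmultiplesHom_apply, natCast_zsmul, toMul_nsmul]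
  rfl

lemma zmodPowHom_ofAdd [NeZero n] (c : ZMod n) : zmodPowHom x hx (ofAdd c) = x ^ c.val := by
  rw [← zmodPowHom_ofAdd_natCast, ZMod.natCast_zmod_val]

end ZModPowHom

lemma conj_pow_eq_pow_pow {G : Type*} [Group G] {x y : G} {e : ℕ} (h : y * x * y⁻¹ = x ^ e)
    (k : ℕ) : y ^ k * x * (y ^ k)⁻¹ = x ^ e ^ k := by
  induction k with
  | zero => simp
  | succ k ih =>
    calc y ^ (k + 1) * x * (y ^ (k + 1))⁻¹ = y * (y ^ k * x * (y ^ k)⁻¹) * y⁻¹ := by group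
      _ = (y * x * y⁻¹) ^ e ^ k := by rw [ih, conj_pow]
      _ = x ^ e ^ (k + 1) := by rw [h, ← pow_mul, pow_succ']

namespace ModularP

def mulP (p : ℕ) : ZMod p →+ ZMod (p ^ 2) :=
  ZMod.lift p ⟨zmultiplesHom _ (p : ZMod (p ^ 2)), by simp [pmul]⟩

section MulP

variable {p : ℕ}

lemma mulP_natCast (t : ℕ) : mulP p t = t * p := by
  rw [← Int.cast_natCast, mulP, ZMod.lift_coe]
  simp

lemma mulP_one : mulP p 1 = p := by
  rw [← Nat.cast_one, mulP_natCast, Nat.cast_one, one_mul]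

lemma natCast_mul_mulP (k : ZMod p) : (p : ZMod (p ^ 2)) * mulP p k = 0 := by
  obtain ⟨n, rfl⟩ := ZMod.intCast_surjective k
  rw [mulP, ZMod.lift_coe]
  simp only [zmultiplesHom_apply, zsmul_eq_mul]
  rw [mul_left_comm, pmul, mul_zero]

variable [NeZero p]

lemma mulP_eq_val_mul (k : ZMod p) : mulP p k = k.val * p := by
  rw [← mulP_natCast, ZMod.natCast_zmod_val]

lemma mulP_mul_mulP (r s : ZMod p) : mulP p r * mulP p s = 0 := by
  rw [mulP_eq_val_mul r, mul_assoc, natCast_mul_mulP, mul_zero]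

lemma one_add_natCast_pow_val (k : ZMod p) : (1 + p : ZMod (p ^ 2)) ^ k.val = 1 + mulP p k := by
  rw [one_add_sq_zero_pow _ (pmul p), mulP_eq_val_mul]

lemma exists_mulP_eq_of_dvd_val {n : ZMod (p ^ 2)} (h : p ∣ n.val) : ∃ s, mulP p s = n := by
  obtain ⟨t, ht⟩ := h
  exact ⟨t, by rw [mulP_natCast, ← Nat.cast_mul, mul_comm, ← ht, ZMod.natCast_zmod_val]⟩

lemma dvd_val_of_natCast_mul_eq_zero {n : ZMod (p ^ 2)} (h : (p : ZMod (p ^ 2)) * n = 0) :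
    p ∣ n.val := by
  rw [← ZMod.natCast_zmod_val n, ← Nat.cast_mul, ZMod.natCast_eq_zero_iff] at h
  exact (Nat.mul_dvd_mul_iff_left (Nat.pos_of_neZero p)).mp (by simpa only [sq] using h)

variable [hp : Fact p.Prime]

lemma mulP_injective : Function.Injective (mulP p) := by
  rw [injective_iff_map_eq_zero]
  intro s hs
  rw [mulP_eq_val_mul, ← Nat.cast_mul, ZMod.natCast_eq_zero_iff, sq] at hs
  rw [← ZMod.natCast_zmod_val s, ZMod.natCast_eq_zero_iff]
  exact (Nat.mul_dvd_mul_iff_right hp.out.pos).mp hs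

lemma isUnit_of_natCast_mul_ne_zero {m : ZMod (p ^ 2)} (h : (p : ZMod (p ^ 2)) * m ≠ 0) :
    IsUnit m := by
  rw [← ZMod.natCast_zmod_val m, ZMod.isUnit_natCast_iff_not_dvd_pow hp.out two_pos]
  rintro ⟨t, ht⟩
  refine h ?_
  rw [← ZMod.natCast_zmod_val m, ht, Nat.cast_mul, ← mul_assoc, pmul, zero_mul]

end MulP

section Elements

variable {p : ℕ}

def mk (m : ZMod (p ^ 2)) (k : ZMod p) : M p := ⟨ofAdd m, ofAdd k⟩

lemma exists_eq_mk (z : M p) : ∃ m k, z = mk m k := ⟨_, _, rfl⟩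

lemma mk_inj {m m' : ZMod (p ^ 2)} {k k' : ZMod p} : mk m k = mk m' k' ↔ m = m' ∧ k = k' := by
  simp [mk, SemidirectProduct.ext_iff]

lemma rightHom_mk (m : ZMod (p ^ 2)) (k : ZMod p) :
    SemidirectProduct.rightHom (mk m k) = ofAdd k := rfl

lemma one_eq_mk : (1 : M p) = mk 0 0 := rfl

def genA : M p := mk 1 0

def genB : M p := mk 0 1

variable [NeZero p]

lemma actionHom_ofAdd (k : ZMod p) (m : ZMod (p ^ 2)) :
    actionHom p (ofAdd k) (ofAdd m) = ofAdd ((1 + mulP p k) * m) := by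
  have hk : actionHom p (ofAdd k) = unitsToMulAut (p ^ 2) (u p ^ k.val) := by
    rw [map_pow]
    conv_lhs => rw [← ZMod.natCast_zmod_val k, ← Int.cast_natCast]
    show Additive.toMul (ZMod.lift p _ ((k.val : ℤ) : ZMod p)) = _
    rw [ZMod.lift_coe, zmultiplesHom_apply, natCast_zsmul, toMul_nsmul]
    rfl
  have hu : ((u p ^ k.val : (ZMod (p ^ 2))ˣ) : ZMod (p ^ 2)) = 1 + mulP p k := by
    rw [Units.val_pow_eq_pow_val, show (u p : ZMod (p ^ 2)) = 1 + p by simp [u],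
      one_add_natCast_pow_val]
  rw [hk, ← hu]
  rfl

lemma mk_mul_mk (m m' : ZMod (p ^ 2)) (k k' : ZMod p) :
    mk m k * mk m' k' = mk (m + (1 + mulP p k) * m') (k + k') := by
  show (⟨ofAdd m * actionHom p (ofAdd k) (ofAdd m'), ofAdd k * ofAdd k'⟩ : M p) = _
  rw [actionHom_ofAdd]
  rfl

lemma mk_pow (m : ZMod (p ^ 2)) (k : ZMod p) (t : ℕ) :
    mk m k ^ t =
      mk (((t : ZMod (p ^ 2)) + (t.choose 2 : ZMod (p ^ 2)) * mulP p k) * m) ((t : ZMod p) * k) := by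
  induction t with
  | zero => simp [one_eq_mk]
  | succ t ih =>
    have hmulP : mulP p (t * k) = t * mulP p k := by
      rw [← nsmul_eq_mul, map_nsmul, nsmul_eq_mul]
    rw [pow_succ, ih, mk_mul_mk, hmulP, Nat.choose_succ_succ, Nat.choose_one_right]
    congr 1 <;> push_cast <;> ring

lemma mk_eq_genA_pow_mul_genB_pow (m : ZMod (p ^ 2)) (k : ZMod p) :
    mk m k = genA ^ m.val * genB ^ k.val := by
  simp [genA, genB, mk_pow, mk_mul_mk]

lemma hom_ext {H : Type*} [Group H] {f g : M p →* H} (ha : f genA = g genA)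
    (hb : f genB = g genB) : f = g := by
  ext z
  obtain ⟨m, k, rfl⟩ := exists_eq_mk z
  rw [mk_eq_genA_pow_mul_genB_pow, map_mul, map_mul, map_pow, map_pow, map_pow, map_pow, ha, hb]

end Elements

section Lift

variable {p : ℕ} [NeZero p] {H : Type*} [Group H]

def lift (x y : H) (hx : x ^ (p ^ 2) = 1) (hy : y ^ p = 1) (hyx : y * x = x ^ (1 + p) * y) :
    M p →* H :=
  SemidirectProduct.lift (zmodPowHom x hx) (zmodPowHom y hy) fun g => by
    refine MonoidHom.ext fun z => ?_
    rw [← ofAdd_toAdd g, ← ofAdd_toAdd z]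
    simp only [MonoidHom.comp_apply, MulEquiv.coe_toMonoidHom, MulAut.conj_apply,
      actionHom_ofAdd]
    rw [zmodPowHom_ofAdd y, zmodPowHom_ofAdd x hx z.toAdd, ← conj_pow,
      conj_pow_eq_pow_pow (mul_inv_eq_of_eq_mul hyx), ← pow_mul, ← zmodPowHom_ofAdd_natCast x hx]
    push_cast
    rw [one_add_natCast_pow_val, ZMod.natCast_zmod_val]

lemma lift_mk (x y : H) (hx : x ^ (p ^ 2) = 1) (hy : y ^ p = 1)
    (hyx : y * x = x ^ (1 + p) * y) (m : ZMod (p ^ 2)) (k : ZMod p) :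
    lift x y hx hy hyx (mk m k) = x ^ m.val * y ^ k.val := by
  rw [mk, SemidirectProduct.mk_eq_inl_mul_inr, map_mul, lift, SemidirectProduct.lift_inl,
    SemidirectProduct.lift_inr, zmodPowHom_ofAdd, zmodPowHom_ofAdd]

end Lift

section OddPrime

variable {p : ℕ} [hp : Fact p.Prime]

instance : Finite (M p) := Finite.of_equiv _ SemidirectProduct.equivProd.symm

lemma natCast_ne_zero : (p : ZMod (p ^ 2)) ≠ 0 := by
  rw [Ne, ZMod.natCast_eq_zero_iff]
  intro h
  have := Nat.le_of_dvd hp.out.pos h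
  nlinarith [hp.out.two_le]

lemma mk_pow_prime (hodd : Odd p) (m : ZMod (p ^ 2)) (k : ZMod p) :
    mk m k ^ p = mk ((p : ZMod (p ^ 2)) * m) 0 := by
  have h2p : 2 < p := hp.out.two_le.lt_of_ne' (by rintro rfl; exact absurd hodd (by decide))
  obtain ⟨c, hc⟩ : p ∣ p.choose 2 := hp.out.dvd_choose_self two_ne_zero h2p
  rw [mk_pow, hc, Nat.cast_mul, mul_comm (p : ZMod (p ^ 2)), mul_assoc, natCast_mul_mulP,
    mul_zero, add_zero, ZMod.natCast_self, zero_mul]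

lemma mk_pow_prime_eq_one_iff (hodd : Odd p) (m : ZMod (p ^ 2)) (k : ZMod p) :
    mk m k ^ p = 1 ↔ (p : ZMod (p ^ 2)) * m = 0 := by
  rw [mk_pow_prime hodd, one_eq_mk, mk_inj, and_iff_left rfl]

lemma mk_pow_sq (hodd : Odd p) (m : ZMod (p ^ 2)) (k : ZMod p) : mk m k ^ (p ^ 2) = 1 := by
  have hsq := pow_mul (mk m k) p p
  rw [← sq] at hsq
  rw [hsq, mk_pow_prime hodd, mk_pow_prime hodd, ← mul_assoc, pmul, zero_mul, one_eq_mk]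

lemma mk_mul_mk_eq_pow_mul_iff (hodd : Odd p) {m : ZMod (p ^ 2)} (hm : IsUnit m)
    (r s l : ZMod p) :
    mk (mulP p s) l * mk m r = mk m r ^ (1 + p) * mk (mulP p s) l ↔ l = 1 := by
  have hr := natCast_mul_mulP r
  have hrs := mulP_mul_mulP r s
  rw [pow_add, pow_one, mk_pow_prime hodd, mk_mul_mk, mk_mul_mk, mk_mul_mk, mk_inj, add_zero,
    add_comm r l, and_iff_left rfl]
  calc _ ↔ mulP p l * m = mulP p 1 * m := by
        rw [mulP_one]
        constructor <;> intro h
        · linear_combination h + m * hr + hrs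
        · linear_combination h - m * hr - hrs
    _ ↔ l = 1 := by rw [hm.mul_left_inj, mulP_injective.eq_iff]

lemma genA_pow_prime_ne_one (hodd : Odd p) : (genA : M p) ^ p ≠ 1 := by
  rw [genA, Ne, mk_pow_prime_eq_one_iff hodd, mul_one]
  exact natCast_ne_zero

lemma genB_pow_prime (hodd : Odd p) : (genB : M p) ^ p = 1 := by
  rw [genB, mk_pow_prime_eq_one_iff hodd, mul_zero]

lemma genB_mul_genA (hodd : Odd p) : (genB : M p) * genA = genA ^ (1 + p) * genB := by
  simpa [genA, genB] using (mk_mul_mk_eq_pow_mul_iff hodd isUnit_one 0 0 1).mpr rfl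

lemma mk_mulP_zero (hodd : Odd p) (t : ZMod p) : mk (mulP p t) 0 = (genA ^ p) ^ t.val := by
  simp [genA, mk_pow_prime hodd, mk_pow, mulP_eq_val_mul]

lemma map_mk_mulP_zero (hodd : Odd p) {f : M p →* M p} {m : ZMod (p ^ 2)} {r : ZMod p}
    (hf : f genA = mk m r) (t : ZMod p) : f (mk (mulP p t) 0) = mk (mulP p t * m) 0 := by
  rw [mk_mulP_zero hodd, map_pow, map_pow, hf, mk_pow_prime hodd, mk_pow, map_zero,
    mulP_eq_val_mul]
  simp only [mul_zero, add_zero, mul_assoc]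

def endOfParams (hodd : Odd p) (w : (ZMod (p ^ 2))ˣ) (r s : ZMod p) : M p →* M p :=
  lift (mk w r) (mk (mulP p s) 1) (mk_pow_sq hodd _ _)
    ((mk_pow_prime_eq_one_iff hodd _ _).mpr (natCast_mul_mulP s))
    ((mk_mul_mk_eq_pow_mul_iff hodd w.isUnit r s 1).mpr rfl)

lemma endOfParams_genA (hodd : Odd p) (w : (ZMod (p ^ 2))ˣ) (r s : ZMod p) :
    endOfParams hodd w r s genA = mk w r := by
  have : Fact (1 < p ^ 2) := ⟨Nat.one_lt_pow two_ne_zero hp.out.one_lt⟩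
  rw [endOfParams, genA, lift_mk, ZMod.val_one, ZMod.val_zero, pow_one, pow_zero, mul_one]

lemma endOfParams_genB (hodd : Odd p) (w : (ZMod (p ^ 2))ˣ) (r s : ZMod p) :
    endOfParams hodd w r s genB = mk (mulP p s) 1 := by
  have : Fact (1 < p) := ⟨hp.out.one_lt⟩
  rw [endOfParams, genB, lift_mk, ZMod.val_one, ZMod.val_zero, pow_one, pow_zero, one_mul]

lemma endOfParams_injective (hodd : Odd p) (w : (ZMod (p ^ 2))ˣ) (r s : ZMod p) :
    Function.Injective (endOfParams hodd w r s) := by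
  rw [injective_iff_map_eq_one]
  intro z hz
  obtain ⟨m, k, rfl⟩ := exists_eq_mk z
  have hA := endOfParams_genA hodd w r s
  -- `(m, k) ^ p = (p m, 0)` is sent to `(p m w, 0)`, so `p ∣ m`.
  have hm : (m.val : ZMod p) = 0 := by
    have hzp := congrArg (· ^ p) hz
    simp only [← map_pow, one_pow, mk_pow_prime hodd] at hzp
    rw [← ZMod.natCast_zmod_val m, mul_comm, ← mulP_natCast,
      map_mk_mulP_zero hodd hA, one_eq_mk, mk_inj, w.isUnit.mul_left_eq_zero] at hzp
    exact mulP_injective (hzp.1.trans (map_zero _).symm)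
  obtain ⟨t, rfl⟩ := exists_mulP_eq_of_dvd_val ((ZMod.natCast_eq_zero_iff _ _).mp hm)
  have hk : k = 0 := by
    have hzr := congrArg (fun z => (SemidirectProduct.rightHom z).toAdd) hz
    simp only [endOfParams, lift_mk, map_mul, map_pow, rightHom_mk, map_one, toAdd_mul,
      toAdd_pow, toAdd_ofAdd, toAdd_one, nsmul_eq_mul, hm, zero_mul, mul_one,
      ZMod.natCast_zmod_val, zero_add] at hzr
    exact hzr
  subst hk
  rw [map_mk_mulP_zero hodd hA, one_eq_mk, mk_inj, w.isUnit.mul_left_eq_zero] at hz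
  rw [hz.1, one_eq_mk]

noncomputable def autOfParams (hodd : Odd p) (q : (ZMod (p ^ 2))ˣ × ZMod p × ZMod p) :
    MulAut (M p) :=
  MulEquiv.ofBijective (endOfParams hodd q.1 q.2.1 q.2.2)
    (Finite.injective_iff_bijective.mp (endOfParams_injective hodd _ _ _))

lemma autOfParams_injective (hodd : Odd p) : Function.Injective (autOfParams hodd) := by
  rintro ⟨w, r, s⟩ ⟨w', r', s'⟩ h
  have hA := congrArg (· genA) h
  have hB := congrArg (· genB) h
  simp only [autOfParams, MulEquiv.ofBijective_apply, endOfParams_genA, endOfParams_genB,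
    mk_inj, and_true, mulP_injective.eq_iff] at hA hB
  rw [Units.ext hA.1, hA.2, hB]

lemma autOfParams_surjective (hodd : Odd p) : Function.Surjective (autOfParams hodd) := by
  intro φ
  obtain ⟨m, r, ha⟩ := exists_eq_mk (φ genA)
  obtain ⟨n, l, hb⟩ := exists_eq_mk (φ genB)
  have hn : (p : ZMod (p ^ 2)) * n = 0 := by
    rw [← mk_pow_prime_eq_one_iff hodd n l, ← hb, ← map_pow, genB_pow_prime hodd, map_one]
  obtain ⟨s, rfl⟩ := exists_mulP_eq_of_dvd_val (dvd_val_of_natCast_mul_eq_zero hn)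
  have hm : IsUnit m := isUnit_of_natCast_mul_ne_zero fun h => genA_pow_prime_ne_one hodd <|
    φ.injective <| by rw [map_pow, ha, map_one, mk_pow_prime_eq_one_iff hodd]; exact h
  have hl : l = 1 := (mk_mul_mk_eq_pow_mul_iff hodd hm r s l).mp <| by
    rw [← ha, ← hb, ← map_pow, ← map_mul, ← map_mul, genB_mul_genA hodd]
  subst hl
  refine ⟨(hm.unit, r, s), MulEquiv.toMonoidHom_injective (hom_ext ?_ ?_)⟩
  · simp [autOfParams, endOfParams_genA, ha]
  · simp [autOfParams, endOfParams_genB, hb]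

end OddPrime

end ModularP

open ModularP in
/-- for an odd prime `p`, the automorphism group of the modular group `M(p)`
of order `p^3` has order `(p-1) * p^3`. -/
theorem card_mulAut_modularGroup (p : ℕ) (hp : p.Prime) (hodd : Odd p) :
    Nat.card (MulAut (M p)) = (p - 1) * p ^ 3 := by
  have := Fact.mk hp
  rw [← Nat.card_congr (Equiv.ofBijective _
      ⟨autOfParams_injective hodd, autOfParams_surjective hodd⟩),
    Nat.card_prod, Nat.card_prod, Nat.card_zmod, Nat.card_eq_fintype_card,
    ZMod.card_units_eq_totient, Nat.totient_prime_pow hp two_pos]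
  ring
end

section
/- Let p be a prime and Γ a finite p-group such that the dimension over F_p of H^1(Γ, F_p) equals the dimension over F_p of H^2(Γ, F_p) (i.e., Γ is balanced). Then H^2(Γ, ℚ_p/ℤ_p) = 0, where cohomology is taken with coefficients in ℚ_p/ℤ_p with trivial Γ-action. -/
/-!
Multiplication by `p` on `A = ℚ_p/ℤ_p` is onto with kernel `ℤ/p`, and the long exact sequence of
`0 → ℤ/p → A → A → 0` reads `H¹(A) →p H¹(A) →δ H²(ℤ/p) → H²(A) →p H²(A)`. Since `H¹(A) = Hom(Γ, A)`
is finite, the image of `δ` has the order of the `p`-torsion `Hom(Γ, ℤ/p) = H¹(ℤ/p)` of `H¹(A)`;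
balancedness then makes `δ` onto, so `p` is injective on `H²(A)`. As `H²(A)` is killed by
`|Γ| = p^k`, it vanishes.
-/

noncomputable section

/-- The image of `ℤ_p` in `ℚ_p` under the canonical inclusion, as an additive subgroup. -/
def padicIntAddSubgroup (p : ℕ) [Fact p.Prime] : AddSubgroup ℚ_[p] :=
  (PadicInt.Coe.ringHom (p := p)).toAddMonoidHom.range

/-- The p-adic numbers modulo the image of the p-adic integers: `ℚ_p/ℤ_p`. -/
abbrev QpModZp (p : ℕ) [Fact p.Prime] : Type :=
  ℚ_[p] ⧸ padicIntAddSubgroup p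

open CategoryTheory groupCohomology

section

variable {A : Type*} [AddCommGroup A]

lemma finite_setOf_pow_nsmul_eq_zero {n : ℕ} (h : {a : A | n • a = 0}.Finite) (k : ℕ) :
    {a : A | n ^ k • a = 0}.Finite := by
  induction k with
  | zero => simp
  | succ k ih =>
    have hfiber (b : A) : ((n • ·) ⁻¹' {b} : Set A).Finite := by
      rcases Set.eq_empty_or_nonempty ((n • ·) ⁻¹' {b} : Set A) with hb | ⟨a₀, ha₀⟩
      · simp [hb]
      · refine (h.image (a₀ + ·)).subset fun a ha => ⟨a - a₀, ?_, add_sub_cancel a₀ a⟩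
        simp_all [nsmul_sub]
    refine (ih.preimage' fun b _ => hfiber b).subset fun a ha => ?_
    simpa [pow_succ', mul_nsmul] using ha

lemma finite_addMonoidHom_of_finite_card_nsmul_eq_zero {H : Type*} [AddGroup H] [Finite H]
    (hA : {a : A | Nat.card H • a = 0}.Finite) : Finite (H →+ A) := by
  have := hA.to_subtype
  have hmem (χ : H →+ A) (h : H) : χ h ∈ {a : A | Nat.card H • a = 0} := by
    simp [← map_nsmul, card_nsmul_eq_zero']
  exact Finite.of_injective (fun χ h => (⟨χ h, hmem χ h⟩ : {a : A | Nat.card H • a = 0}))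
    fun χ ψ hχψ => AddMonoidHom.ext fun h => congrArg Subtype.val (congrFun hχψ h)

lemma natCard_addMonoidHom_nsmul_eq_zero_of_exact {H B : Type*} [AddMonoid H] [AddCommGroup B]
    (n : ℕ) {ι : B →+ A} (hι : Function.Injective ι) (hexact : Function.Exact ι (n • · : A → A)) :
    Nat.card {χ : H →+ A // n • χ = 0} = Nat.card (H →+ B) := by
  have hcomp (χ : H →+ B) : n • ι.comp χ = 0 :=
    AddMonoidHom.ext fun h => hexact.apply_apply_eq_zero (χ h)
  refine (Nat.card_eq_of_bijective (fun χ => ⟨ι.comp χ, hcomp χ⟩) ⟨fun χ ψ hχψ => ?_, ?_⟩).symm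
  · ext h
    exact hι (DFunLike.congr_fun (congrArg Subtype.val hχψ) h)
  · rintro ⟨χ, hχ⟩
    have hmem (h : H) : χ h ∈ ι.range := (hexact (χ h)).1 (DFunLike.congr_fun hχ h)
    refine ⟨(AddMonoidHom.ofInjective hι).symm.toAddMonoidHom.comp (χ.codRestrict _ hmem), ?_⟩
    ext h
    simp

end

lemma Function.Exact.natCard_range_eq_natCard_ker {M N : Type*} [AddGroup M] [AddGroup N]
    [Finite M] {φ : M →+ M} {ψ : M →+ N} (h : Function.Exact φ ψ) :
    Nat.card ψ.range = Nat.card φ.ker := by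
  have hker : ψ.ker = φ.range := AddSubgroup.ext h
  have hψ := ψ.ker.card_eq_card_quotient_mul_card_addSubgroup
  have hφ := φ.ker.card_eq_card_quotient_mul_card_addSubgroup
  rw [Nat.card_congr (QuotientAddGroup.quotientKerEquivRange ψ).toEquiv, hker] at hψ
  rw [Nat.card_congr (QuotientAddGroup.quotientKerEquivRange φ).toEquiv, mul_comm, hψ] at hφ
  exact Nat.eq_of_mul_eq_mul_right Nat.card_pos hφ

lemma natCard_eq_of_finrank_eq {K V W : Type*} [Field K] [AddCommGroup V] [Module K V]
    [AddCommGroup W] [Module K W] [Finite V] [Finite W]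
    (h : Module.finrank K V = Module.finrank K W) : Nat.card V = Nat.card W :=
  Nat.card_congr (LinearEquiv.ofFinrankEq V W h).toEquiv

namespace QpModZp

variable {p : ℕ} [Fact p.Prime]

lemma coe_eq_zero_iff (x : ℚ_[p]) : (x : QpModZp p) = 0 ↔ ‖x‖ ≤ 1 := by
  rw [QuotientAddGroup.eq_zero_iff]
  exact ⟨fun ⟨z, hz⟩ => hz ▸ z.norm_le_one, fun h => ⟨⟨x, h⟩, rfl⟩⟩

lemma nsmul_surjective {n : ℕ} (hn : n ≠ 0) :
    Function.Surjective (n • · : QpModZp p → QpModZp p) := by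
  intro a
  obtain ⟨x, rfl⟩ := QuotientAddGroup.mk_surjective a
  refine ⟨(x / n : ℚ_[p]), ?_⟩
  change n • _ = _
  rw [← QuotientAddGroup.mk_nsmul, nsmul_eq_mul, mul_div_cancel₀ _ (Nat.cast_ne_zero.2 hn)]

def zmodHom : ZMod p →+ QpModZp p :=
  ZMod.lift p ⟨zmultiplesHom _ ((p : ℚ_[p])⁻¹ : ℚ_[p]), by
    rw [zmultiplesHom_apply, natCast_zsmul, ← QuotientAddGroup.mk_nsmul, nsmul_eq_mul,
      mul_inv_cancel₀ (Nat.cast_ne_zero.2 (Fact.out : p.Prime).ne_zero), coe_eq_zero_iff, norm_one]⟩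

lemma zmodHom_natCast (n : ℕ) : zmodHom (n : ZMod p) = ((n / p : ℚ_[p]) : QpModZp p) := by
  rw [← Int.cast_natCast, zmodHom, ZMod.lift_coe, zmultiplesHom_apply, natCast_zsmul,
    ← QuotientAddGroup.mk_nsmul, nsmul_eq_mul, div_eq_mul_inv]

lemma zmodHom_injective : Function.Injective (zmodHom (p := p)) := by
  refine (injective_iff_map_eq_zero _).2 fun a ha => ?_
  rw [← ZMod.natCast_zmod_val a, zmodHom_natCast, coe_eq_zero_iff, norm_div, Padic.norm_p,
    div_inv_eq_mul] at ha
  have hp : (1 : ℝ) < p := mod_cast (Fact.out : p.Prime).one_lt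
  rw [← ZMod.natCast_zmod_val a, ZMod.natCast_eq_zero_iff, ← Padic.norm_natCast_lt_one_iff]
  nlinarith [norm_nonneg (a.val : ℚ_[p])]

lemma exact_zmodHom : Function.Exact (zmodHom (p := p)) (p • · : QpModZp p → QpModZp p) := by
  intro y
  constructor
  · intro h
    obtain ⟨x, rfl⟩ := QuotientAddGroup.mk_surjective y
    change p • (x : QpModZp p) = 0 at h
    rw [← QuotientAddGroup.mk_nsmul, coe_eq_zero_iff] at h
    obtain ⟨n, -, hn⟩ := PadicInt.exists_mem_range ⟨p • x, h⟩
    obtain ⟨w, hw⟩ := (PadicInt.norm_lt_one_iff_dvd _).1 (PadicInt.mem_nonunits.1 hn)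
    refine ⟨n, ?_⟩
    rw [zmodHom_natCast, ← sub_eq_zero, ← QuotientAddGroup.mk_sub, coe_eq_zero_iff]
    have hx : (n / p : ℚ_[p]) - x = -w := by
      have hw' : p • x - n = p * (w : ℚ_[p]) := congrArg ((↑) : ℤ_[p] → ℚ_[p]) hw
      have hp : (p : ℚ_[p]) ≠ 0 := Nat.cast_ne_zero.2 (Fact.out : p.Prime).ne_zero
      rw [nsmul_eq_mul] at hw'
      field_simp
      linear_combination -hw'
    rw [hx, norm_neg]
    exact w.norm_le_one
  · rintro ⟨a, rfl⟩
    change p • zmodHom a = 0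
    rw [← map_nsmul, nsmul_eq_mul, CharP.cast_eq_zero, zero_mul, map_zero]

end QpModZp

namespace groupCohomology

variable {k G : Type} [CommRing k] [Group G]

theorem card_nsmul_H2_eq_zero [Finite G] (A : Rep k G) (x : H2 A) : Nat.card G • x = 0 := by
  induction x using H2_induction_on with | h f => ?_
  have := Fintype.ofFinite G
  rw [← map_nsmul, H2π_eq_zero_iff]
  -- summing the cocycle identity over its last variable exhibits `|G| • f` as a coboundary
  refine ⟨fun g => ∑ j, f (g, j), funext fun ⟨g, h⟩ => ?_⟩
  have hsum : ∑ j, (A.ρ g (f (h, j)) - f (g * h, j) + f (g, h * j) - f (g, h)) = 0 :=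
    Finset.sum_eq_zero fun j _ => (mem_cocycles₂_def f).1 f.2 g h j
  have hshift : ∑ j, f (g, h * j) = ∑ j, f (g, j) :=
    Equiv.sum_comp (Equiv.mulLeft h) fun j => f (g, j)
  rw [Finset.sum_sub_distrib, Finset.sum_add_distrib, Finset.sum_sub_distrib, hshift,
    Finset.sum_const, Finset.card_univ, ← Nat.card_eq_fintype_card, ← map_sum, sub_eq_zero] at hsum
  convert hsum using 1 <;> rfl

lemma H2π_surjective (A : Rep k G) : Function.Surjective (H2π A) :=
  (ModuleCat.epi_iff_surjective _).1 inferInstance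

theorem finite_H2 [Finite G] (A : Rep k G) [Finite A] : Finite (H2 A) :=
  .of_surjective _ (H2π_surjective A)

lemma map_id_nsmul {A B : Rep k G} (φ : A ⟶ B) (m n : ℕ) :
    map (MonoidHom.id G) (m • φ) n = m • map (MonoidHom.id G) φ n := by
  change (HomologicalComplex.homologyFunctor _ _ n).map ((cochainsFunctor k G).map (m • φ)) = _
  rw [Functor.map_nsmul, Functor.map_nsmul]
  rfl

/-- Both sides are the quotient of the same group of cocycles by the same coboundaries: the
cocycle and coboundary conditions do not involve the scalars. -/
def H2TrivialAddEquivInt (V : Type) [AddCommGroup V] [Module k V] :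
    H2 (Rep.trivial k G V) ≃+ H2 (Rep.trivial ℤ G V) :=
  let π : cocycles₂ (Rep.trivial k G V) →+ H2 (Rep.trivial ℤ G V) :=
    (H2π (Rep.trivial ℤ G V)).hom.toAddMonoidHom.comp
      { toFun f := ⟨f, f.2⟩, map_zero' := rfl, map_add' _ _ := rfl }
  have hπ : Function.Surjective π := fun y => by
    obtain ⟨f, rfl⟩ := H2π_surjective _ y
    exact ⟨⟨f, f.2⟩, rfl⟩
  have hker : (H2π (Rep.trivial k G V)).hom.toAddMonoidHom.ker = π.ker := by
    ext f
    exact (H2π_eq_zero_iff f).trans (H2π_eq_zero_iff (A := Rep.trivial ℤ G V) ⟨f, f.2⟩).symm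
  (QuotientAddGroup.quotientKerEquivOfSurjective _ (H2π_surjective _)).symm.trans <|
    (QuotientAddGroup.quotientAddEquivOfEq hker).trans
      (QuotientAddGroup.quotientKerEquivOfSurjective π hπ)

end groupCohomology

lemma CategoryTheory.ShortComplex.Exact.moduleCat_function_exact {R : Type*} [Ring R]
    {S : ShortComplex (ModuleCat R)} (hS : S.Exact) : Function.Exact S.f S.g :=
  fun y => (SetLike.ext_iff.1 hS.moduleCat_range_eq_ker y).symm

namespace Rep

variable {k Γ : Type} [CommRing k] [Group Γ] {U V W : Type} [AddCommGroup U] [AddCommGroup V]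
  [AddCommGroup W] [Module k U] [Module k V] [Module k W]

abbrev trivialMap (f : V →ₗ[k] W) : Rep.trivial k Γ V ⟶ Rep.trivial k Γ W :=
  (Rep.trivialFunctor k Γ).map (ModuleCat.ofHom f)

def trivialShortComplex (f : U →ₗ[k] V) (g : V →ₗ[k] W) (hfg : g ∘ₗ f = 0) :
    ShortComplex (Rep k Γ) :=
  ShortComplex.mk (trivialMap f) (trivialMap g) (by ext x; exact LinearMap.congr_fun hfg x)

lemma trivialShortComplex_shortExact {f : U →ₗ[k] V} {g : V →ₗ[k] W} (hfg : Function.Exact f g)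
    (hf : Function.Injective f) (hg : Function.Surjective g) :
    (trivialShortComplex (Γ := Γ) f g (LinearMap.ext hfg.apply_apply_eq_zero)).ShortExact where
  exact := by
    rw [← ShortComplex.exact_map_iff_of_faithful _ (forget₂ (Rep k Γ) (ModuleCat k)),
      ShortComplex.moduleCat_exact_iff_range_eq_ker]
    exact hfg.linearMap_ker_eq.symm
  mono_f := (Rep.mono_iff_injective _).2 hf
  epi_g := (Rep.epi_iff_surjective _).2 hg

end Rep

section NsmulShortComplex

variable {p : ℕ} {Γ : Type} [Group Γ] {A : Type} [AddCommGroup A] {ι : ZMod p →+ A}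

variable (p Γ) in
abbrev nsmulShortComplex (hexact : Function.Exact ι (p • · : A → A)) : ShortComplex (Rep ℤ Γ) :=
  Rep.trivialShortComplex ι.toIntLinearMap (p • LinearMap.id)
    (LinearMap.ext hexact.apply_apply_eq_zero)

lemma map_nsmulShortComplex_g (hexact : Function.Exact ι (p • · : A → A)) (n : ℕ)
    (x : groupCohomology (Rep.trivial ℤ Γ A) n) :
    (map (MonoidHom.id Γ) (nsmulShortComplex p Γ hexact).g n).hom x = p • x := by
  change (map (MonoidHom.id Γ) (p • 𝟙 (Rep.trivial ℤ Γ A)) n).hom x = p • x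
  rw [map_id_nsmul, map_id]
  rfl

lemma nsmulShortComplex_shortExact (hι : Function.Injective ι)
    (hexact : Function.Exact ι (p • · : A → A)) (hdiv : Function.Surjective (p • · : A → A)) :
    (nsmulShortComplex p Γ hexact).ShortExact :=
  Rep.trivialShortComplex_shortExact hexact hι hdiv

lemma natCard_H1_nsmul_eq_zero (hι : Function.Injective ι)
    (hexact : Function.Exact ι (p • · : A → A)) :
    Nat.card {x : H1 (Rep.trivial ℤ Γ A) // p • x = 0} = Nat.card (Additive Γ →+ ZMod p) := by
  let e := (H1IsoOfIsTrivial (Rep.trivial ℤ Γ A)).toLinearEquiv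
  rw [← natCard_addMonoidHom_nsmul_eq_zero_of_exact (H := Additive Γ) p hι hexact]
  exact Nat.card_congr (e.toEquiv.subtypeEquiv fun x => by simp [← map_nsmul])

lemma surjective_δ_nsmulShortComplex [NeZero p] [Finite Γ] (hι : Function.Injective ι)
    (hexact : Function.Exact ι (p • · : A → A)) (hdiv : Function.Surjective (p • · : A → A))
    [Finite (H1 (Rep.trivial ℤ Γ A))]
    (hcard : Nat.card (H2 (Rep.trivial ℤ Γ (ZMod p))) ≤ Nat.card (Additive Γ →+ ZMod p)) :
    Function.Surjective
      (δ (nsmulShortComplex_shortExact (Γ := Γ) hι hexact hdiv) 1 2 rfl).hom := by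
  set hX := nsmulShortComplex_shortExact (Γ := Γ) hι hexact hdiv
  let P : H1 (Rep.trivial ℤ Γ A) →+ H1 (Rep.trivial ℤ Γ A) :=
    (mapShortComplex₃ hX (i := 1) rfl).f.hom.toAddMonoidHom
  let D : H1 (Rep.trivial ℤ Γ A) →+ H2 (Rep.trivial ℤ Γ (ZMod p)) :=
    (mapShortComplex₃ hX (i := 1) rfl).g.hom.toAddMonoidHom
  have hex : Function.Exact P D :=
    (mapShortComplex₃_exact hX (i := 1) rfl).moduleCat_function_exact
  have hrange : Nat.card D.range = Nat.card (Additive Γ →+ ZMod p) := by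
    rw [hex.natCard_range_eq_natCard_ker, ← natCard_H1_nsmul_eq_zero hι hexact]
    exact Nat.card_congr (Equiv.subtypeEquivRight fun x => by
      rw [AddMonoidHom.mem_ker]
      exact Iff.of_eq (congrArg (· = 0) (map_nsmulShortComplex_g hexact 1 x)))
  have := finite_H2 (Rep.trivial ℤ Γ (ZMod p))
  exact AddMonoidHom.range_eq_top.1 (AddSubgroup.eq_top_of_le_card _ (hrange ▸ hcard))

lemma injective_nsmul_H2_of_surjective_δ (hι : Function.Injective ι)
    (hexact : Function.Exact ι (p • · : A → A)) (hdiv : Function.Surjective (p • · : A → A))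
    (hδ : Function.Surjective
      (δ (nsmulShortComplex_shortExact (Γ := Γ) hι hexact hdiv) 1 2 rfl).hom) :
    Function.Injective (p • · : H2 (Rep.trivial ℤ Γ A) → H2 (Rep.trivial ℤ Γ A)) := by
  set hX := nsmulShortComplex_shortExact (Γ := Γ) hι hexact hdiv
  have hf : ∀ y, (mapShortComplex₂ (nsmulShortComplex p Γ hexact) 2).f.hom y = 0 := by
    intro y
    obtain ⟨x, rfl⟩ := hδ y
    exact (mapShortComplex₁_exact hX (i := 1) rfl).moduleCat_function_exact.apply_apply_eq_zero x
  have hg := (mapShortComplex₂_exact hX 2).moduleCat_function_exact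
  intro x y hxy
  have hp : p • (x - y) = 0 := by simp only [nsmul_sub, hxy, sub_self]
  obtain ⟨z, hz⟩ := (hg (x - y)).1 ((map_nsmulShortComplex_g hexact 2 (x - y)).trans hp)
  exact sub_eq_zero.1 (hz ▸ hf z)

lemma finite_H1_of_isPGroup [Fact p.Prime] [Finite Γ] (hΓ : IsPGroup p Γ)
    (hA : {a : A | p • a = 0}.Finite) :
    Finite (H1 (Rep.trivial ℤ Γ A)) := by
  obtain ⟨k, hk⟩ := IsPGroup.iff_card.1 hΓ
  have : Finite (Additive Γ →+ A) :=
    finite_addMonoidHom_of_finite_card_nsmul_eq_zero (hk ▸ finite_setOf_pow_nsmul_eq_zero hA k)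
  exact .of_equiv _ (H1IsoOfIsTrivial _).toLinearEquiv.toEquiv.symm

theorem subsingleton_H2_of_exact [Fact p.Prime] [Finite Γ] (hΓ : IsPGroup p Γ)
    (hι : Function.Injective ι)
    (hexact : Function.Exact ι (p • · : A → A)) (hdiv : Function.Surjective (p • · : A → A))
    (hcard : Nat.card (H2 (Rep.trivial ℤ Γ (ZMod p))) ≤ Nat.card (Additive Γ →+ ZMod p)) :
    Subsingleton (H2 (Rep.trivial ℤ Γ A)) := by
  obtain ⟨k, hk⟩ := IsPGroup.iff_card.1 hΓ
  have : Finite (H1 (Rep.trivial ℤ Γ A)) :=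
    finite_H1_of_isPGroup hΓ (Set.ext hexact ▸ Set.finite_range ι)
  have hinj := (injective_nsmul_H2_of_surjective_δ hι hexact hdiv
    (surjective_δ_nsmulShortComplex hι hexact hdiv hcard)).iterate k
  rw [smul_iterate] at hinj
  exact ⟨fun x y => hinj (by simp only [← hk, card_nsmul_H2_eq_zero])⟩

end NsmulShortComplex

/-- for a prime `p` and a balanced finite `p`-group `Γ` (i.e. one with
`dim_{F_p} H¹(Γ, F_p) = dim_{F_p} H²(Γ, F_p)`), the cohomology group `H²(Γ, ℚ_p/ℤ_p)`,
with coefficients in `ℚ_p/ℤ_p` with trivial `Γ`-action, vanishes. -/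
theorem h2_qpModZp_eq_zero_of_balanced (p : ℕ) [Fact p.Prime]
    (Γ : Type) [Group Γ] [Finite Γ] (hΓ : IsPGroup p Γ)
    (hbal : Module.finrank (ZMod p) (groupCohomology (Rep.trivial (ZMod p) Γ (ZMod p)) 1) =
      Module.finrank (ZMod p) (groupCohomology (Rep.trivial (ZMod p) Γ (ZMod p)) 2)) :
    ∀ x : groupCohomology (Rep.trivial ℤ Γ (QpModZp p)) 2, x = 0 := by
  have eH1 := (H1IsoOfIsTrivial (Rep.trivial (ZMod p) Γ (ZMod p))).toLinearEquiv
  have : Finite (Additive Γ →+ ZMod p) :=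
    finite_addMonoidHom_of_finite_card_nsmul_eq_zero (Set.toFinite _)
  have : Finite (H1 (Rep.trivial (ZMod p) Γ (ZMod p))) := .of_equiv _ eH1.toEquiv.symm
  have := finite_H2 (Rep.trivial (ZMod p) Γ (ZMod p))
  have hcard : Nat.card (H2 (Rep.trivial ℤ Γ (ZMod p))) = Nat.card (Additive Γ →+ ZMod p) := by
    rw [← Nat.card_congr (H2TrivialAddEquivInt (k := ZMod p) (G := Γ) (ZMod p)).toEquiv,
      ← Nat.card_congr eH1.toEquiv]
    exact (natCard_eq_of_finrank_eq hbal).symm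
  have := subsingleton_H2_of_exact hΓ QpModZp.zmodHom_injective QpModZp.exact_zmodHom
    (QpModZp.nsmul_surjective (Fact.out : p.Prime).ne_zero) hcard.le
  exact fun x => Subsingleton.elim x 0
end
end

section
/- Let p be a prime and Γ a finite p-group such that the dimension over F_p of H^1(Γ, F_p) equals the dimension over F_p of H^2(Γ, F_p) (i.e., Γ is balanced). Then the Schur multiplier of Γ is trivial: the group homology H_2(Γ, ℤ), with trivial ℤ coefficients, vanishes. -/
noncomputable section

/-- The degree-2 differential `∂₂ : ℤ[Γ²] → ℤ[Γ]` of the inhomogeneous bar complex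
computing group homology with trivial `ℤ` coefficients:
`∂₂[g|h] = [h] - [gh] + [g]`. -/
def barD2 (Γ : Type) [Group Γ] : ((Γ × Γ) →₀ ℤ) →ₗ[ℤ] (Γ →₀ ℤ) :=
  Finsupp.lift _ ℤ _ fun gh =>
    Finsupp.single gh.2 1 - Finsupp.single (gh.1 * gh.2) 1 + Finsupp.single gh.1 1

/-- The degree-3 differential `∂₃ : ℤ[Γ³] → ℤ[Γ²]` of the inhomogeneous bar complex
computing group homology with trivial `ℤ` coefficients:
`∂₃[g|h|k] = [h|k] - [gh|k] + [g|hk] - [g|h]`. -/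
def barD3 (Γ : Type) [Group Γ] : ((Γ × Γ × Γ) →₀ ℤ) →ₗ[ℤ] ((Γ × Γ) →₀ ℤ) :=
  Finsupp.lift _ ℤ _ fun t =>
    Finsupp.single (t.2.1, t.2.2) 1 - Finsupp.single (t.1 * t.2.1, t.2.2) 1 +
      Finsupp.single (t.1, t.2.1 * t.2.2) 1 - Finsupp.single (t.1, t.2.1) 1

/-!
Let `K = ker ∂₂` and `B = im ∂₃`. Summing over the last bar coordinate gives maps
`s₂ : ℤ[Γ²] → ℤ[Γ³]` and `s₁ : ℤ[Γ] → ℤ[Γ²]` with `∂₃ s₂ = s₁ ∂₂ - |Γ|`, so `|Γ| = pⁿ` kills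
`K / B`; and `|Γ| • ℤ[Γ] ⊆ im ∂₂` gives `rank K = |Γ|² - |Γ|`. Over `𝔽_p` the cochain
differential `d₂₃` is the transpose of `∂₃ ⊗ 𝔽_p`, and for trivial coefficients `H¹ = Z¹`, so
balancedness gives `dim ker d₂₃ = dim H² + dim im d₁₂ = dim Z¹ + dim im d₁₂ = |Γ|`. Hence
`im (∂₃ ⊗ 𝔽_p)` has dimension `|Γ|² - |Γ| ≥ dim (K mod p)`, so `K mod p = B mod p`; as `ℤ[Γ]` is
torsion free this lifts to `K = B + p K`, and then `K = B + pⁿ K = B`.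
-/

open Module Pointwise

universe u

theorem Submodule.le_of_le_sup_smul_of_pow_smul_le {R M : Type*} [CommSemiring R]
    [AddCommMonoid M] [Module R M] {B N : Submodule R M} {a : R} {n : ℕ}
    (h : N ≤ B ⊔ a • N) (hn : a ^ n • N ≤ B) : N ≤ B := by
  suffices ∀ j : ℕ, N ≤ B ⊔ a ^ j • N by simpa [hn] using this n
  intro j
  induction j with
  | zero => simp
  | succ j ih =>
    calc N ≤ B ⊔ a ^ j • N := ih
      _ ≤ B ⊔ a ^ j • (B ⊔ a • N) := sup_le_sup_left (Submodule.map_mono h) _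
      _ ≤ B ⊔ a ^ (j + 1) • N := by
        rw [Submodule.smul_sup', pow_succ, mul_smul, ← sup_assoc]
        exact sup_le_sup_right (sup_le le_rfl (Submodule.smul_le_self_of_tower _ _)) _

section Reduction

variable {X : Type*}

def reduceMod (n : ℕ) (X : Type*) : (X →₀ ℤ) →ₗ[ℤ] (X →₀ ZMod n) :=
  Finsupp.mapRange.linearMap (Int.castAddHom (ZMod n)).toIntLinearMap

@[simp]
lemma reduceMod_single (n : ℕ) (x : X) (c : ℤ) :
    reduceMod n X (Finsupp.single x c) = Finsupp.single x (c : ZMod n) := by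
  simp [reduceMod]

lemma reduceMod_surjective (n : ℕ) : Function.Surjective (reduceMod n X) :=
  Finsupp.mapRange_surjective _ Int.cast_zero ZMod.intCast_surjective

lemma exists_eq_smul_of_reduceMod_eq_zero {n : ℕ} {x : X →₀ ℤ} (hx : reduceMod n X x = 0) :
    ∃ z, x = (n : ℤ) • z := by
  have hdvd (a : X) : (n : ℤ) ∣ x a :=
    (ZMod.intCast_zmod_eq_zero_iff_dvd _ _).mp (by simpa [reduceMod] using congr($hx a))
  refine ⟨x.mapRange (· / n) (Int.zero_ediv _), ?_⟩
  ext a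
  simp [Int.mul_ediv_cancel' (hdvd a)]

lemma mem_sup_smul_ker_of_reduceMod_mem {M : Type*} [AddCommGroup M] [NoZeroSMulDivisors ℤ M]
    {n : ℕ} (hn : n ≠ 0) (f : (X →₀ ℤ) →ₗ[ℤ] M) {B : Submodule ℤ (X →₀ ℤ)}
    (hB : B ≤ LinearMap.ker f) {z : X →₀ ℤ} (hz : z ∈ LinearMap.ker f)
    (hred : reduceMod n X z ∈ B.map (reduceMod n X)) :
    z ∈ B ⊔ (n : ℤ) • LinearMap.ker f := by
  obtain ⟨b, hb, hbz⟩ := hred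
  obtain ⟨w, hw⟩ := exists_eq_smul_of_reduceMod_eq_zero (n := n) (x := z - b)
    (by rw [map_sub, hbz, sub_self])
  have hw_ker : w ∈ LinearMap.ker f := by
    have : (n : ℤ) • f w = 0 := by
      rw [← map_smul, ← hw, map_sub, LinearMap.mem_ker.mp hz, LinearMap.mem_ker.mp (hB hb),
        sub_self]
    exact LinearMap.mem_ker.mpr ((smul_eq_zero.mp this).resolve_left (by exact_mod_cast hn))
  rw [← add_sub_cancel b z, hw]
  exact Submodule.add_mem_sup hb (Submodule.smul_mem_pointwise_smul _ _ _ hw_ker)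

lemma finrank_span_image_le_finrank {R S M V : Type*} [Ring R] [StrongRankCondition R]
    [AddCommGroup M] [Module R M] [DivisionRing S] [AddCommGroup V] [Module R V] [Module S V]
    [SMul R S] [IsScalarTower R S V] (K : Submodule R M) [Module.Free R K] [Module.Finite R K]
    (f : M →ₗ[R] V) : finrank S (Submodule.span S (f '' K)) ≤ finrank R K := by
  let b := Module.finBasis R K
  have hspan : Submodule.span S (f '' K) = Submodule.span S (Set.range (f ∘ K.subtype ∘ b)) := by
    refine le_antisymm (Submodule.span_le.mpr ?_) (Submodule.span_mono ?_)
    · have hK : K.map f = Submodule.span R (Set.range (f ∘ K.subtype ∘ b)) := by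
        rw [Set.range_comp, Set.range_comp, ← Submodule.map_span, ← Submodule.map_span, b.span_eq,
          Submodule.map_top, Submodule.range_subtype]
      rw [← Submodule.map_coe, hK]
      exact Submodule.span_le_restrictScalars R S _
    · rintro _ ⟨i, rfl⟩
      exact ⟨_, (b i).2, rfl⟩
  rw [hspan]
  simpa [Set.finrank] using finrank_range_le_card (R := S) (f ∘ K.subtype ∘ b)

end Reduction

section IntegralBarComplex

variable {Γ : Type} [Group Γ]

@[simp]
lemma barD2_single (g h : Γ) (c : ℤ) :
    barD2 Γ (Finsupp.single (g, h) c) =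
      c • (Finsupp.single h 1 - Finsupp.single (g * h) 1 + Finsupp.single g 1) := by
  simp [barD2]

@[simp]
lemma barD3_single (g h j : Γ) (c : ℤ) :
    barD3 Γ (Finsupp.single (g, h, j) c) =
      c • (Finsupp.single (h, j) 1 - Finsupp.single (g * h, j) 1 +
        Finsupp.single (g, h * j) 1 - Finsupp.single (g, h) 1) := by
  simp [barD3]

lemma barD2_comp_barD3 : barD2 Γ ∘ₗ barD3 Γ = 0 := by
  ext ⟨g, h, j⟩ : 2
  simp only [LinearMap.comp_apply, Finsupp.lsingle_apply, barD3_single, one_smul, map_sub, map_add,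
    barD2_single, mul_assoc, LinearMap.zero_apply]
  abel

lemma range_barD3_le_ker_barD2 : LinearMap.range (barD3 Γ) ≤ LinearMap.ker (barD2 Γ) :=
  LinearMap.range_le_ker_iff.mpr barD2_comp_barD3

variable [Fintype Γ]

def barHomotopy₂ (Γ : Type) [Group Γ] [Fintype Γ] : ((Γ × Γ) →₀ ℤ) →ₗ[ℤ] ((Γ × Γ × Γ) →₀ ℤ) :=
  Finsupp.lift _ ℤ _ fun gh => ∑ x : Γ, Finsupp.single (gh.1, gh.2, x) 1

def barHomotopy₁ (Γ : Type) [Group Γ] [Fintype Γ] : (Γ →₀ ℤ) →ₗ[ℤ] ((Γ × Γ) →₀ ℤ) :=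
  Finsupp.lift _ ℤ _ fun g => ∑ x : Γ, Finsupp.single (g, x) 1

@[simp]
lemma barHomotopy₂_single (g h : Γ) (c : ℤ) :
    barHomotopy₂ Γ (Finsupp.single (g, h) c) = c • ∑ x : Γ, Finsupp.single (g, h, x) 1 := by
  simp [barHomotopy₂]

@[simp]
lemma barHomotopy₁_single (g : Γ) (c : ℤ) :
    barHomotopy₁ Γ (Finsupp.single g c) = c • ∑ x : Γ, Finsupp.single (g, x) 1 := by
  simp [barHomotopy₁]

lemma barD3_comp_barHomotopy₂ :
    barD3 Γ ∘ₗ barHomotopy₂ Γ =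
      barHomotopy₁ Γ ∘ₗ barD2 Γ - (Fintype.card Γ : ℤ) • LinearMap.id := by
  ext ⟨g, h⟩ : 2
  have hshift : ∑ x : Γ, Finsupp.single (g, h * x) (1 : ℤ) = ∑ x : Γ, Finsupp.single (g, x) 1 :=
    Fintype.sum_equiv (Equiv.mulLeft h) _ _ fun _ => rfl
  simp only [LinearMap.comp_apply, Finsupp.lsingle_apply, barHomotopy₂_single, one_smul, map_sum,
    barD3_single, Finset.sum_sub_distrib, Finset.sum_add_distrib, hshift, barD2_single, map_sub,
    map_add, barHomotopy₁_single, LinearMap.sub_apply, LinearMap.smul_apply, LinearMap.id_apply,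
    Finset.sum_const, Finset.card_univ, natCast_zsmul]

lemma card_smul_ker_barD2_le_range_barD3 :
    (Fintype.card Γ : ℤ) • LinearMap.ker (barD2 Γ) ≤ LinearMap.range (barD3 Γ) := by
  rintro _ ⟨z, hz, rfl⟩
  refine ⟨-barHomotopy₂ Γ z, ?_⟩
  have := LinearMap.congr_fun barD3_comp_barHomotopy₂ z
  simp_all

lemma card_smul_mem_range_barD2 (v : Γ →₀ ℤ) :
    (Fintype.card Γ : ℤ) • v ∈ LinearMap.range (barD2 Γ) := by
  induction v using Finsupp.induction_linear with
  | zero => simp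
  | add v w hv hw => rw [smul_add]; exact add_mem hv hw
  | single g c =>
    refine ⟨c • ∑ j ∈ Finset.range (Fintype.card Γ), Finsupp.single (g ^ j, g) 1, ?_⟩
    have htelescope (j : ℕ) : barD2 Γ (Finsupp.single (g ^ j, g) 1) =
        Finsupp.single g 1 + (Finsupp.single (g ^ j) 1 - Finsupp.single (g ^ (j + 1)) 1) := by
      rw [barD2_single, one_smul, pow_succ]
      abel
    simp only [map_smul, map_sum, htelescope, Finset.sum_add_distrib, Finset.sum_range_sub',
      pow_zero, pow_card_eq_one, sub_self, add_zero, Finset.sum_const, Finset.card_range]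
    rw [← Finsupp.smul_single_one g c, ← natCast_zsmul, smul_comm]

lemma finrank_range_barD2 : finrank ℤ (LinearMap.range (barD2 Γ)) = Fintype.card Γ := by
  refine le_antisymm ?_ ?_
  · simpa using Submodule.finrank_le (LinearMap.range (barD2 Γ))
  · have hinj : Function.Injective (((Fintype.card Γ : ℤ) • LinearMap.id).codRestrict
        (LinearMap.range (barD2 Γ)) card_smul_mem_range_barD2) := fun v w hvw =>
      smul_right_injective (Γ →₀ ℤ) (Int.natCast_ne_zero.mpr Fintype.card_ne_zero)
        (Subtype.ext_iff.mp hvw)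
    simpa using LinearMap.finrank_le_finrank_of_injective hinj

lemma finrank_ker_barD2_add_card :
    finrank ℤ (LinearMap.ker (barD2 Γ)) + Fintype.card Γ = Fintype.card Γ * Fintype.card Γ := by
  have := Submodule.finrank_quotient_add_finrank (LinearMap.ker (barD2 Γ))
  rw [(barD2 Γ).quotKerEquivRange.finrank_eq, finrank_range_barD2, finrank_finsupp_self,
    Fintype.card_prod] at this
  omega

end IntegralBarComplex

namespace groupCohomology

lemma finrank_H1_eq_finrank_cocycles₁ {k G : Type u} [CommRing k] [Group G] (A : Rep k G)
    [A.IsTrivial] : finrank k (H1 A) = finrank k (cocycles₁ A) :=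
  ((H1IsoOfIsTrivial A).trans (cocycles₁IsoOfIsTrivial A).symm).toLinearEquiv.finrank_eq

lemma finrank_H2_add_finrank_coboundaries₂ {k G : Type u} [Field k] [Group G] [Finite G]
    (A : Rep k G) [Module.Finite k A] :
    finrank k (H2 A) + finrank k (coboundaries₂ A) = finrank k (cocycles₂ A) := by
  have hsurj : Function.Surjective (H2π A).hom := (ModuleCat.epi_iff_surjective _).mp inferInstance
  have hker : LinearMap.ker (H2π A).hom = (coboundaries₂ A).comap (cocycles₂ A).subtype := by
    ext x
    exact H2π_eq_zero_iff x
  have := LinearMap.finrank_range_add_finrank_ker (H2π A).hom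
  rwa [LinearMap.range_eq_top.mpr hsurj, finrank_top, hker,
    (Submodule.comapSubtypeEquivOfLe (coboundaries₂_le_cocycles₂ A)).finrank_eq] at this

lemma finrank_range_d₂₃_add_card_of_balanced {k G : Type u} [Field k] [Group G] [Fintype G]
    (hbal : finrank k (H1 (Rep.trivial k G k)) = finrank k (H2 (Rep.trivial k G k))) :
    finrank k (LinearMap.range (d₂₃ (Rep.trivial k G k)).hom) + Fintype.card G =
      Fintype.card G * Fintype.card G := by
  set A := Rep.trivial k G k
  have hH1 : finrank k (H1 A) = finrank k (LinearMap.ker (d₁₂ A).hom) :=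
    finrank_H1_eq_finrank_cocycles₁ A
  have hH2 : finrank k (H2 A) + finrank k (LinearMap.range (d₁₂ A).hom) =
      finrank k (LinearMap.ker (d₂₃ A).hom) :=
    finrank_H2_add_finrank_coboundaries₂ A
  have hd₁₂ : finrank k (LinearMap.range (d₁₂ A).hom) + finrank k (LinearMap.ker (d₁₂ A).hom) =
      Fintype.card G :=
    (LinearMap.finrank_range_add_finrank_ker _).trans (finrank_fintype_fun_eq_card k)
  have hd₂₃ : finrank k (LinearMap.range (d₂₃ A).hom) + finrank k (LinearMap.ker (d₂₃ A).hom) =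
      Fintype.card G * Fintype.card G :=
    (LinearMap.finrank_range_add_finrank_ker _).trans
      ((finrank_fintype_fun_eq_card k).trans (Fintype.card_prod G G))
  omega

end groupCohomology

open groupCohomology

def barD3Of (R : Type*) [CommRing R] (Γ : Type*) [Group Γ] :
    ((Γ × Γ × Γ) →₀ R) →ₗ[R] ((Γ × Γ) →₀ R) :=
  Finsupp.lift _ R _ fun t =>
    Finsupp.single (t.2.1, t.2.2) 1 - Finsupp.single (t.1 * t.2.1, t.2.2) 1 +
      Finsupp.single (t.1, t.2.1 * t.2.2) 1 - Finsupp.single (t.1, t.2.1) 1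

@[simp]
lemma barD3Of_single {R Γ : Type*} [CommRing R] [Group Γ] (g h j : Γ) (c : R) :
    barD3Of R Γ (Finsupp.single (g, h, j) c) =
      c • (Finsupp.single (h, j) 1 - Finsupp.single (g * h, j) 1 +
        Finsupp.single (g, h * j) 1 - Finsupp.single (g, h) 1) := by
  simp [barD3Of]

lemma dualMap_barD3Of_comp_llift (k Γ : Type) [Field k] [Group Γ] :
    (barD3Of k Γ).dualMap ∘ₗ (Finsupp.llift k k k (Γ × Γ)).toLinearMap =
      (Finsupp.llift k k k (Γ × Γ × Γ)).toLinearMap ∘ₗ (d₂₃ (Rep.trivial k Γ k)).hom := by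
  ext f ⟨g, h, j⟩
  simp only [LinearMap.comp_apply, LinearEquiv.coe_coe, LinearMap.dualMap_apply,
    Finsupp.lsingle_apply, barD3Of_single, one_smul, map_sub, map_add]
  simp [Finsupp.llift_apply]

lemma finrank_range_barD3Of_eq_finrank_range_d₂₃ (k Γ : Type) [Field k] [Group Γ] :
    finrank k (LinearMap.range (barD3Of k Γ)) =
      finrank k (LinearMap.range (d₂₃ (Rep.trivial k Γ k)).hom) := by
  rw [← LinearMap.finrank_range_dualMap_eq_finrank_range,
    ← LinearMap.range_comp_of_range_eq_top _ (LinearEquiv.range (Finsupp.llift k k k (Γ × Γ))),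
    dualMap_barD3Of_comp_llift, LinearMap.range_comp, LinearEquiv.finrank_map_eq]

section ModP

variable {Γ : Type} [Group Γ]

lemma reduceMod_barD3 (n : ℕ) (v : (Γ × Γ × Γ) →₀ ℤ) :
    reduceMod n _ (barD3 Γ v) = barD3Of (ZMod n) Γ (reduceMod n _ v) := by
  induction v using Finsupp.induction_linear with
  | zero => simp
  | add v w hv hw => simp only [map_add, hv, hw]
  | single t c =>
    obtain ⟨g, h, j⟩ := t
    simp [← Int.cast_smul_eq_zsmul (ZMod n)]

lemma range_barD3Of_le_map_range_barD3 (n : ℕ) :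
    (LinearMap.range (barD3Of (ZMod n) Γ)).restrictScalars ℤ ≤
      (LinearMap.range (barD3 Γ)).map (reduceMod n _) := by
  rintro _ ⟨w, rfl⟩
  obtain ⟨v, rfl⟩ := reduceMod_surjective n w
  exact ⟨barD3 Γ v, ⟨v, rfl⟩, reduceMod_barD3 n v⟩

variable (p : ℕ) [Fact p.Prime] [Fintype Γ]

lemma reduceMod_mem_range_barD3Of_of_balanced
    (hbal : finrank (ZMod p) (H1 (Rep.trivial (ZMod p) Γ (ZMod p))) =
      finrank (ZMod p) (H2 (Rep.trivial (ZMod p) Γ (ZMod p))))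
    {z : (Γ × Γ) →₀ ℤ} (hz : z ∈ LinearMap.ker (barD2 Γ)) :
    reduceMod p _ z ∈ LinearMap.range (barD3Of (ZMod p) Γ) := by
  set P := Submodule.span (ZMod p)
    (reduceMod p _ '' (LinearMap.ker (barD2 Γ) : Set ((Γ × Γ) →₀ ℤ)))
  have hle : LinearMap.range (barD3Of (ZMod p) Γ) ≤ P := fun x hx => by
    obtain ⟨y, hy, rfl⟩ := range_barD3Of_le_map_range_barD3 p hx
    exact Submodule.subset_span ⟨y, range_barD3_le_ker_barD2 hy, rfl⟩
  have hdim : finrank (ZMod p) P ≤ finrank (ZMod p) (LinearMap.range (barD3Of (ZMod p) Γ)) := by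
    have hP : finrank (ZMod p) P ≤ finrank ℤ (LinearMap.ker (barD2 Γ)) :=
      finrank_span_image_le_finrank _ _
    have hK := finrank_ker_barD2_add_card (Γ := Γ)
    have hB := finrank_range_d₂₃_add_card_of_balanced hbal
    rw [← finrank_range_barD3Of_eq_finrank_range_d₂₃] at hB
    omega
  rw [Submodule.eq_of_le_of_finrank_le hle hdim]
  exact Submodule.subset_span ⟨z, hz, rfl⟩

lemma ker_barD2_le_range_barD3_sup_smul_of_balanced
    (hbal : finrank (ZMod p) (H1 (Rep.trivial (ZMod p) Γ (ZMod p))) =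
      finrank (ZMod p) (H2 (Rep.trivial (ZMod p) Γ (ZMod p)))) :
    LinearMap.ker (barD2 Γ) ≤ LinearMap.range (barD3 Γ) ⊔ (p : ℤ) • LinearMap.ker (barD2 Γ) :=
  fun _ hz => mem_sup_smul_ker_of_reduceMod_mem (Fact.out : p.Prime).ne_zero _
    range_barD3_le_ker_barD2 hz
    (range_barD3Of_le_map_range_barD3 p (reduceMod_mem_range_barD3Of_of_balanced p hbal hz))

end ModP

/-- for a prime `p` and a balanced finite `p`-group `Γ` (i.e. one with
`dim_{F_p} H¹(Γ, F_p) = dim_{F_p} H²(Γ, F_p)`), the Schur multiplier `H₂(Γ, ℤ)` (the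
second group homology with trivial `ℤ` coefficients, here computed as the homology
`ker ∂₂ / im ∂₃` of the bar complex) is trivial. -/
theorem schur_multiplier_trivial_of_balanced (p : ℕ) [Fact p.Prime]
    (Γ : Type) [Group Γ] [Finite Γ] (hΓ : IsPGroup p Γ)
    (hbal : Module.finrank (ZMod p) (groupCohomology (Rep.trivial (ZMod p) Γ (ZMod p)) 1) =
      Module.finrank (ZMod p) (groupCohomology (Rep.trivial (ZMod p) Γ (ZMod p)) 2)) :
    LinearMap.ker (barD2 Γ) = LinearMap.range (barD3 Γ) := by
  have := Fintype.ofFinite Γ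
  obtain ⟨n, hn⟩ := IsPGroup.iff_card.mp hΓ
  have hpow : ((p : ℤ) ^ n) • LinearMap.ker (barD2 Γ) ≤ LinearMap.range (barD3 Γ) := by
    rw [← Nat.cast_pow, ← hn, Nat.card_eq_fintype_card]
    exact card_smul_ker_barD2_le_range_barD3
  exact le_antisymm
    (Submodule.le_of_le_sup_smul_of_pow_smul_le
      (ker_barD2_le_range_barD3_sup_smul_of_balanced p hbal) hpow)
    range_barD3_le_ker_barD2
end
end

section
/- Let p be a prime, let P be a finite p-group acting by automorphisms on a nontrivial finite p-group K. Then there exists a surjective group homomorphism f : K → ℤ/pℤ that is P-invariant, i.e., f(σ • k) = f(k) for all σ ∈ P and k ∈ K. Equivalently, K has a P-stable normal subgroup N such that K/N is cyclic of order p and the induced action of P on K/N is trivial. -/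
/-!
The homomorphisms `K →* ℤ/p` form a group of exponent `p`, nontrivial because a nontrivial
`p`-group has a normal subgroup of index `p`. The `p`-group `P` acts on this group by
precomposition and fixes the trivial homomorphism, so by the fixed-point congruence for `p`-group
actions it fixes a second one. A nontrivial homomorphism onto a group of prime order is surjective.
-/

theorem isPGroup_monoidHom_multiplicative_zmod (p : ℕ) (G : Type*) [Group G] :
    IsPGroup p (G →* Multiplicative (ZMod p)) := fun f =>
  ⟨1, MonoidHom.ext fun g => by
    rw [pow_one, MonoidHom.pow_apply, ← ofAdd_toAdd (f g), ← ofAdd_nsmul,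
      ZModModule.char_nsmul_eq_zero, ofAdd_zero, MonoidHom.one_apply]⟩

theorem Subgroup.exists_surjective_monoidHom_zmod_of_index_eq {p : ℕ} [Fact p.Prime]
    {G : Type*} [Group G] (H : Subgroup G) [H.Normal] (hH : H.index = p) :
    ∃ f : G →* Multiplicative (ZMod p), Function.Surjective f := by
  let e : G ⧸ H ≃* Multiplicative (ZMod p) :=
    mulEquivOfPrimeCardEq (H.index_eq_card ▸ hH) (by simp)
  exact ⟨e.toMonoidHom.comp (QuotientGroup.mk' H),
    e.surjective.comp (QuotientGroup.mk'_surjective H)⟩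

theorem MonoidHom.surjective_of_ne_one_of_card_prime {G H : Type*} [Group G] [Group H]
    [Fact (Nat.card H).Prime] {f : G →* H} (hf : f ≠ 1) : Function.Surjective f :=
  MonoidHom.range_eq_top.mp <|
    f.range.eq_bot_or_eq_top_of_prime_card.resolve_left (mt MonoidHom.range_eq_bot_iff.mp hf)

namespace IsPGroup

variable {p : ℕ} [hp : Fact p.Prime]

theorem exists_normal_subgroup_index_eq_prime {G : Type*} [Group G] [Finite G] [Nontrivial G]
    (hG : IsPGroup p G) : ∃ H : Subgroup G, H.Normal ∧ H.index = p := by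
  obtain ⟨n, hn, hcard⟩ := hG.nontrivial_iff_card.mp ‹_›
  obtain ⟨H, hH⟩ := Sylow.exists_subgroup_card_pow_prime p (n := n - 1)
    (hcard ▸ pow_dvd_pow p (n.sub_le 1))
  have hindex : H.index = p := by
    have := H.index_mul_card
    rw [hH, hcard, ← Nat.sub_add_cancel hn, pow_succ'] at this
    simpa [Nat.sub_add_cancel hn] using
      Nat.eq_of_mul_eq_mul_right (pow_pos hp.out.pos _) this
  -- `p` is the smallest prime factor of `|G| = p ^ n`, so a subgroup of index `p` is normal.
  refine ⟨H, H.normal_of_index_eq_minFac_card ?_, hindex⟩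
  rw [hindex, hcard, Nat.pow_minFac hn.ne', hp.out.minFac_eq]

theorem nontrivial_monoidHom_multiplicative_zmod {G : Type*} [Group G] [Finite G] [Nontrivial G]
    (hG : IsPGroup p G) : Nontrivial (G →* Multiplicative (ZMod p)) := by
  obtain ⟨H, _, hH⟩ := hG.exists_normal_subgroup_index_eq_prime
  obtain ⟨f, hf⟩ := H.exists_surjective_monoidHom_zmod_of_index_eq hH
  refine ⟨f, 1, ?_⟩
  rintro rfl
  obtain ⟨g, hg⟩ := hf (Multiplicative.ofAdd 1)
  rw [MonoidHom.one_apply, eq_comm, ofAdd_eq_one] at hg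
  exact one_ne_zero hg

theorem exists_smul_invariant_monoidHom_ne_one {P K : Type*} [Group P] [Group K] [Finite K]
    [Nontrivial K] [MulDistribMulAction P K] (hP : IsPGroup p P) (hK : IsPGroup p K) :
    ∃ f : K →* Multiplicative (ZMod p), f ≠ 1 ∧ ∀ (σ : P) (k : K), f (σ • k) = f k := by
  have : Finite (K →* Multiplicative (ZMod p)) := .of_injective _ DFunLike.coe_injective
  have := hK.nontrivial_monoidHom_multiplicative_zmod
  have hdvd : p ∣ Nat.card (K →* Multiplicative (ZMod p)) :=
    (isPGroup_monoidHom_multiplicative_zmod p K).card_eq_or_dvd.resolve_left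
      Finite.one_lt_card.ne'
  -- `Pᵈᵐᵃ` acts on `K →* ℤ/p` by `(DomMulAct.mk σ • f) k = f (σ • k)`.
  have hPdma : IsPGroup p Pᵈᵐᵃ := hP.of_equiv (MulEquiv.inv' P)
  have hone : (1 : K →* Multiplicative (ZMod p)) ∈ MulAction.fixedPoints Pᵈᵐᵃ _ :=
    fun _ => rfl
  obtain ⟨f, hf, hf1⟩ := hPdma.exists_fixed_point_of_prime_dvd_card_of_fixed_point _ hdvd hone
  exact ⟨f, hf1.symm, fun σ k => DFunLike.congr_fun (hf (DomMulAct.mk σ)) k⟩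

end IsPGroup

theorem exists_invariant_surjection_to_zmod_general (p : ℕ) (hp : p.Prime)
    (P K : Type) [Group P] [Group K] [Finite K] [Nontrivial K]
    (hP : IsPGroup p P) (hK : IsPGroup p K) (ρ : P →* MulAut K) :
    ∃ f : K →* Multiplicative (ZMod p),
      Function.Surjective f ∧ ∀ (σ : P) (k : K), f (ρ σ k) = f k := by
  have : Fact p.Prime := ⟨hp⟩
  have : Fact (Nat.card (Multiplicative (ZMod p))).Prime := by simpa using this
  let : MulDistribMulAction P K := MulDistribMulAction.compHom K ρ
  obtain ⟨f, hf1, hf⟩ := hP.exists_smul_invariant_monoidHom_ne_one hK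
  exact ⟨f, MonoidHom.surjective_of_ne_one_of_card_prime hf1, hf⟩

/-- let `p` be a prime and let a finite `p`-group `P` act by automorphisms
(via `ρ : P →* MulAut K`) on a nontrivial finite `p`-group `K`.  Then there is a surjective
homomorphism `f : K → ℤ/pℤ` which is `P`-invariant: `f (σ • k) = f k` for all `σ ∈ P`,
`k ∈ K`. -/
theorem exists_invariant_surjection_to_zmod (p : ℕ) (hp : p.Prime)
    (P K : Type) [Group P] [Group K] [Finite P] [Finite K] [Nontrivial K]
    (hP : IsPGroup p P) (hK : IsPGroup p K) (ρ : P →* MulAut K) :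
    ∃ f : K →* Multiplicative (ZMod p),
      Function.Surjective f ∧ ∀ (σ : P) (k : K), f (ρ σ k) = f k :=
  exists_invariant_surjection_to_zmod_general p hp P K hP hK ρ
end

section
/- Let p be a prime. The sum over all isomorphism classes of finite abelian p-groups A of 1/|Aut(A)| converges. Concretely, parametrizing isomorphism classes by finitely supported functions f : ℕ → ℕ, where f(k) is the multiplicity of the cyclic factor ℤ/p^{k+1}ℤ and A_f = ⊕_{k ∈ ℕ} (ZMod (p^{k+1}))^{f(k)}, the function sending f to 1/|Aut(A_f)| (as a real number) is summable over all finitely supported f : ℕ → ℕ. -/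
/-!
Monomial automorphisms (a permutation of the coordinates followed by scaling each coordinate by a
unit) of the blocks `(ℤ/p^(k+1))^(f k)` show `|Aut A_f| ≥ ∏ₖ p^(k f(k)) f(k)!`. So
`1/|Aut A_f| ≤ ∏ₖ xₖ^f(k)/f(k)!` with `xₖ = p⁻ᵏ`, and every finite partial sum of the right-hand
side is bounded by `∏ₖ exp xₖ = exp (∑ₖ p⁻ᵏ) < ∞`.
-/

open scoped DirectSum

/-- The finite abelian `p`-group `A_f = ⊕ₖ (ℤ/p^(k+1)ℤ)^(f k)` attached to a finitely
supported function `f : ℕ → ℕ`; every finite abelian `p`-group is isomorphic to exactly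
one such group. -/
def abelianPGroupOf (p : ℕ) (f : ℕ →₀ ℕ) : Type :=
  ⨁ (k : ℕ), (Fin (f k) → ZMod (p ^ (k + 1)))

instance (p : ℕ) (f : ℕ →₀ ℕ) : AddCommGroup (abelianPGroupOf p f) := by
  unfold abelianPGroupOf; infer_instance

open Finset Nat

section Monomial

variable {ι R : Type*} [Ring R]

def monomialAddAut (u : ι → Rˣ) (σ : Equiv.Perm ι) : AddAut (ι → R) where
  toFun v i := u i * v (σ i)
  invFun w j := ↑(u (σ.symm j))⁻¹ * w (σ.symm j)
  left_inv v := by ext; simp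
  right_inv w := by ext; simp
  map_add' v w := by ext; simp [mul_add]

theorem monomialAddAut_injective [DecidableEq ι] [Nontrivial R] :
    Function.Injective fun d : (ι → Rˣ) × Equiv.Perm ι => monomialAddAut d.1 d.2 := by
  rintro ⟨u, σ⟩ ⟨u', σ'⟩ h
  have happly (j i : ι) : u i * Pi.single (M := fun _ => R) j 1 (σ i) =
      u' i * Pi.single (M := fun _ => R) j 1 (σ' i) :=
    congrFun (DFunLike.congr_fun h (Pi.single j 1)) i
  have hσ : σ = σ' := Equiv.ext fun i => by
    by_contra hne
    have := happly (σ i) i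
    rw [Pi.single_eq_same, mul_one, Pi.single_eq_of_ne' hne, mul_zero] at this
    exact (u i).ne_zero this
  subst hσ
  have hu : u = u' := funext fun i => Units.ext <| by simpa using happly (σ i) i
  rw [hu]

theorem card_units_pow_mul_factorial_le_card_addAut [Fintype ι] [DecidableEq ι]
    [Nontrivial R] [Finite R] :
    Nat.card Rˣ ^ Fintype.card ι * (Fintype.card ι)! ≤ Nat.card (AddAut (ι → R)) := by
  have := Nat.card_le_card_of_injective _ (monomialAddAut_injective (ι := ι) (R := R))
  simpa [Nat.card_prod, Nat.card_fun, Fintype.card_perm] using this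

end Monomial

theorem DFinsupp.finite_of_subsingleton {ι : Type*} {β : ι → Type*} [∀ i, Zero (β i)]
    [∀ i, Finite (β i)] (s : Finset ι) (hs : ∀ i ∉ s, Subsingleton (β i)) :
    Finite (Π₀ i, β i) := by
  refine Finite.of_injective (fun x (i : s) => x i) fun x y hxy => DFinsupp.ext fun i => ?_
  by_cases hi : i ∈ s
  · exact congrFun hxy ⟨i, hi⟩
  · exact (hs i hi).elim _ _

theorem DirectSum.prod_card_addAut_le {ι : Type*} [DecidableEq ι] (β : ι → Type*)
    [∀ i, AddCommMonoid (β i)] [Finite (⨁ i, β i)] (s : Finset ι) :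
    ∏ i ∈ s, Nat.card (AddAut (β i)) ≤ Nat.card (AddAut (⨁ i, β i)) := by
  classical
  let extend (e : ∀ i : s, AddAut (β i)) (i : ι) : AddAut (β i) :=
    if hi : i ∈ s then e ⟨i, hi⟩ else AddEquiv.refl _
  have hinj : Function.Injective fun e => DFinsupp.mapRange.addEquiv (extend e) := by
    intro e e' h
    funext ⟨i, hi⟩
    ext x
    have := DFunLike.congr_fun (DFunLike.congr_fun h (DFinsupp.single i x)) i
    simpa [extend, hi] using this
  rw [← prod_coe_sort, ← Nat.card_pi]
  exact Nat.card_le_card_of_injective _ hinj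

theorem pow_le_card_units_zmod_prime_pow {p : ℕ} (hp : p.Prime) (k : ℕ) :
    p ^ k ≤ Nat.card (ZMod (p ^ (k + 1)))ˣ := by
  have : NeZero (p ^ (k + 1)) := ⟨pow_ne_zero _ hp.ne_zero⟩
  rw [Nat.card_eq_fintype_card, ZMod.card_units_eq_totient, Nat.totient_prime_pow_succ hp]
  exact Nat.le_mul_of_pos_right _ (Nat.sub_pos_of_lt hp.one_lt)

theorem prod_pow_mul_factorial_le_card_addAut_abelianPGroupOf {p : ℕ} (hp : p.Prime)
    (f : ℕ →₀ ℕ) :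
    (f.prod fun k n => (p ^ k) ^ n * n !) ≤ Nat.card (AddAut (abelianPGroupOf p f)) := by
  have (k : ℕ) : NeZero (p ^ (k + 1)) := ⟨pow_ne_zero _ hp.ne_zero⟩
  have (k : ℕ) : Fact (1 < p ^ (k + 1)) := ⟨Nat.one_lt_pow k.succ_ne_zero hp.one_lt⟩
  have : Finite (⨁ k, Fin (f k) → ZMod (p ^ (k + 1))) :=
    DFinsupp.finite_of_subsingleton f.support fun k hk => by
      rw [Finsupp.notMem_support_iff.1 hk]
      infer_instance
  calc (f.prod fun k n => (p ^ k) ^ n * n !)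
      ≤ ∏ k ∈ f.support, Nat.card (AddAut (Fin (f k) → ZMod (p ^ (k + 1)))) :=
        prod_le_prod' fun k _ => by
          refine le_trans ?_ card_units_pow_mul_factorial_le_card_addAut
          rw [Fintype.card_fin]
          exact Nat.mul_le_mul_right _
            (Nat.pow_le_pow_left (pow_le_card_units_zmod_prime_pow hp k) _)
    _ ≤ Nat.card (AddAut (abelianPGroupOf p f)) :=
        DirectSum.prod_card_addAut_le (fun k => Fin (f k) → ZMod (p ^ (k + 1))) f.support

theorem Finset.sum_finsupp_prod {ι α R : Type*} [Zero α] [CommSemiring R]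
    (s : Finset ι) (t : ι → Finset α) {g : ι → α → R} (hg : ∀ i, g i 0 = 1) :
    ∑ f ∈ s.finsupp t, f.prod g = ∏ i ∈ s, ∑ a ∈ t i, g i a := by
  classical
  rw [prod_sum, Finset.finsupp, sum_map]
  refine sum_congr (by congr) fun x _ => ?_
  rw [Function.Embedding.coeFn_mk,
    Finsupp.prod_of_support_subset _ (Finsupp.support_indicator_subset s x) _ fun i _ => hg i,
    ← prod_attach]
  exact prod_congr rfl fun i _ => by rw [Finsupp.indicator_of_mem]

theorem Real.sum_pow_div_factorial_le_exp {x : ℝ} (hx : 0 ≤ x) (s : Finset ℕ) :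
    ∑ n ∈ s, x ^ n / n ! ≤ Real.exp x := by
  obtain ⟨N, hN⟩ := s.exists_nat_subset_range
  exact (sum_le_sum_of_subset_of_nonneg hN fun n _ _ => by positivity).trans
    (Real.sum_le_exp_of_nonneg hx N)

theorem summable_finsupp_prod_pow_div_factorial {ι : Type*} {x : ι → ℝ} (hx0 : ∀ i, 0 ≤ x i)
    (hx : Summable x) : Summable fun f : ι →₀ ℕ => f.prod fun i n => x i ^ n / n ! := by
  classical
  have hterm : ∀ i n, 0 ≤ x i ^ n / n ! := fun i n => by have := hx0 i; positivity
  refine summable_of_sum_le (c := Real.exp (∑' i, x i))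
    (fun f => prod_nonneg fun i _ => hterm i _) fun u => ?_
  set s := u.biUnion Finsupp.support
  set t : ι → Finset ℕ := fun i => u.image (· i)
  have hu : u ⊆ s.finsupp t := fun f hf => mem_finsupp_iff.2
    ⟨subset_biUnion_of_mem _ hf, fun i _ => mem_image_of_mem _ hf⟩
  calc ∑ f ∈ u, f.prod (fun i n => x i ^ n / n !)
      ≤ ∑ f ∈ s.finsupp t, f.prod (fun i n => x i ^ n / n !) :=
        sum_le_sum_of_subset_of_nonneg hu fun f _ _ => prod_nonneg fun i _ => hterm i _
    _ = ∏ i ∈ s, ∑ n ∈ t i, x i ^ n / n ! := sum_finsupp_prod s t fun i => by simp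
    _ ≤ ∏ i ∈ s, Real.exp (x i) :=
        prod_le_prod (fun i _ => sum_nonneg fun n _ => hterm i n)
          fun i _ => Real.sum_pow_div_factorial_le_exp (hx0 i) _
    _ = Real.exp (∑ i ∈ s, x i) := (Real.exp_sum s x).symm
    _ ≤ Real.exp (∑' i, x i) := Real.exp_le_exp.2 (hx.sum_le_tsum s fun i _ => hx0 i)

/-- for a prime `p`, the sum of `1/|Aut(A)|` over all isomorphism classes of
finite abelian `p`-groups `A` converges: parametrizing the isomorphism classes by finitely
supported functions `f : ℕ → ℕ` via `A_f = ⊕ₖ (ℤ/p^(k+1)ℤ)^(f k)`, the function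
`f ↦ 1/|Aut(A_f)|` is summable. -/
theorem summable_one_div_card_aut_abelian_pGroup (p : ℕ) (hp : p.Prime) :
    Summable (fun f : ℕ →₀ ℕ => (1 : ℝ) / Nat.card (AddAut (abelianPGroupOf p f))) := by
  have hgeom : Summable fun k : ℕ => (p : ℝ)⁻¹ ^ k :=
    summable_geometric_of_lt_one (by positivity) (inv_lt_one_of_one_lt₀ (mod_cast hp.one_lt))
  refine (summable_finsupp_prod_pow_div_factorial (fun k => by positivity) hgeom).of_nonneg_of_le
    (fun f => by positivity) fun f => ?_
  have hpos : 0 < f.prod fun k n => (p ^ k) ^ n * n ! :=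
    prod_pos fun k _ => Nat.mul_pos (pow_pos (pow_pos hp.pos k) _) (factorial_pos _)
  calc (1 : ℝ) / Nat.card (AddAut (abelianPGroupOf p f))
      ≤ 1 / ((f.prod fun k n => (p ^ k) ^ n * n ! : ℕ) : ℝ) :=
        one_div_le_one_div_of_le (mod_cast hpos)
          (mod_cast prod_pow_mul_factorial_le_card_addAut_abelianPGroupOf hp f)
    _ = f.prod fun k n => ((p : ℝ)⁻¹ ^ k) ^ n / n ! := by
        rw [one_div, Finsupp.prod, Nat.cast_prod, ← Finset.prod_inv_distrib]
        refine prod_congr rfl fun k _ => ?_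
        push_cast
        rw [div_eq_mul_inv, mul_inv, inv_pow, inv_pow]
end

section
/- Let p be an odd prime and let ℓ be an integer with ℓ ≡ 1 (mod p) and ℓ ≠ 1, and let k ≥ 1 be the p-adic valuation of ℓ - 1. Then ℓ is a unit in the ring of p-adic integers ℤ_p, and the topological closure of the cyclic subgroup generated by ℓ in the unit group ℤ_pˣ is exactly the subgroup 1 + p^k ℤ_p = {u ∈ ℤ_pˣ : u ≡ 1 mod p^k}. (Hence for odd p, the type of a prime ℓ ≡ 1 mod p is determined by the largest power of p dividing ℓ - 1.) -/
/-!
By the lifting-the-exponent lemma for odd `p`, `ℓ ^ p ^ j = 1 + p ^ (k + j) c`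
with `c` a `p`-adic unit, so `ℓ ^ p ^ j` has exact level `k + j` in the filtration `1 + p ^ n ℤ_p`.
An element `v ≡ 1 mod p ^ k` is then approximated by powers of `ℓ` one `p`-adic digit at a time:
if `ℓ ^ a ≡ v mod p ^ n` with `n ≥ k`, multiplying by a suitable power `ℓ ^ (p ^ (n - k) b)` fixes
the next digit, because `(1 + p ^ n c) ^ b ≡ 1 + b p ^ n c mod p ^ (n + 1)` and `c` is a unit.
Hence the closed subgroup `1 + p ^ k ℤ_p`, which contains `ℓ`, is the closure of `ℓ ^ ℤ`.
-/

theorem Int.exists_pow_prime_pow_sub_one_eq_mul {p : ℕ} [hp : Fact p.Prime] (hodd : Odd p)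
    {ℓ : ℤ} (hdvd : (p : ℤ) ∣ ℓ - 1) (hℓ : ¬ (p : ℤ) ∣ ℓ) (hne : ℓ ≠ 1) (j : ℕ) :
    ∃ c : ℤ, ℓ ^ p ^ j - 1 = p ^ (padicValInt p (ℓ - 1) + j) * c ∧ ¬ (p : ℤ) ∣ c := by
  have hval : emultiplicity (p : ℤ) (ℓ - 1) = padicValInt p (ℓ - 1) := by
    rw [padicValInt.of_ne_one_ne_zero hp.out.ne_one (sub_ne_zero.2 hne)]
    exact (Int.finiteMultiplicity_iff.2
      ⟨by simpa using hp.out.ne_one, sub_ne_zero.2 hne⟩).emultiplicity_eq_multiplicity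
  have hlte := Int.emultiplicity_pow_sub_pow hp.out hodd (y := 1) (by simpa using hdvd) hℓ (p ^ j)
  rw [one_pow, hval, emultiplicity_pow_self hp.out.ne_zero hp.out.prime.not_isUnit] at hlte
  obtain ⟨⟨c, hc⟩, hnc⟩ := emultiplicity_eq_coe.1 (hlte.trans (Nat.cast_add _ _).symm)
  exact ⟨c, hc, fun hpc => hnc (by rw [hc, pow_succ]; exact mul_dvd_mul_left _ hpc)⟩

theorem Units.coe_ker_map_quotient_mk {R : Type*} [CommRing R] (I : Ideal R) :
    ((Units.map (Ideal.Quotient.mk I).toMonoidHom).ker : Set Rˣ) = {u : Rˣ | (u : R) - 1 ∈ I} := by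
  ext u
  simp [Units.ext_iff, Ideal.Quotient.mk_eq_one_iff_sub_mem]

theorem sq_dvd_one_add_pow_sub {R : Type*} [CommRing R] (z : R) (b : ℕ) :
    z ^ 2 ∣ (1 + z) ^ b - (1 + b * z) := by
  induction b with
  | zero => simp
  | succ b ih =>
    have h : (1 + z) ^ (b + 1) - (1 + (b + 1 : ℕ) * z)
        = (1 + z) * ((1 + z) ^ b - (1 + b * z)) + z ^ 2 * b := by
      push_cast; ring
    exact h ▸ dvd_add (dvd_mul_of_dvd_right ih _) (dvd_mul_right _ _)

namespace PadicInt

variable {p : ℕ} [Fact p.Prime]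

theorem isUnit_intCast_iff {z : ℤ} : IsUnit (z : ℤ_[p]) ↔ ¬ (p : ℤ) ∣ z := by
  rw [isUnit_iff, ← norm_int_lt_one_iff_dvd, not_lt]
  exact ⟨fun h => h.ge, fun h => le_antisymm (norm_le_one _) h⟩

theorem pow_dvd_iff_norm_le {n : ℕ} {x : ℤ_[p]} :
    (p : ℤ_[p]) ^ n ∣ x ↔ ‖x‖ ≤ (p : ℝ) ^ (-(n : ℤ)) := by
  rw [norm_le_pow_iff_mem_span_pow, Ideal.mem_span_singleton]

theorem isClosed_setOf_pow_dvd_sub (n : ℕ) (a : ℤ_[p]) :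
    IsClosed {x : ℤ_[p] | (p : ℤ_[p]) ^ n ∣ x - a} := by
  have h : {x : ℤ_[p] | (p : ℤ_[p]) ^ n ∣ x - a} = Metric.closedBall a ((p : ℝ) ^ (-(n : ℤ))) := by
    ext x
    rw [Set.mem_ofPred_eq, Metric.mem_closedBall, dist_eq_norm, pow_dvd_iff_norm_le]
  exact h ▸ Metric.isClosed_closedBall

theorem mem_closure_of_forall_exists_pow_dvd_sub {s : Set ℤ_[p]} {x : ℤ_[p]}
    (h : ∀ n : ℕ, ∃ y ∈ s, (p : ℤ_[p]) ^ n ∣ y - x) : x ∈ closure s := by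
  refine Metric.mem_closure_iff.2 fun ε hε => ?_
  obtain ⟨n, hn⟩ := exists_pow_neg_lt p hε
  obtain ⟨y, hy, hdvd⟩ := h n
  exact ⟨y, hy, by rw [dist_comm, dist_eq_norm]; exact (pow_dvd_iff_norm_le.1 hdvd).trans_lt hn⟩

theorem exists_nat_dvd_add_nat_mul (d : ℤ_[p]) {e : ℤ_[p]} (he : IsUnit e) :
    ∃ b : ℕ, (p : ℤ_[p]) ∣ d + b * e := by
  obtain ⟨e, rfl⟩ := he
  obtain ⟨b, -, hb⟩ := exists_mem_range (x := -d * ((e⁻¹ : ℤ_[p]ˣ) : ℤ_[p]))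
  rw [maximalIdeal_eq_span_p, Ideal.mem_span_singleton] at hb
  refine ⟨b, ?_⟩
  have h : d + b * (e : ℤ_[p]) = -((-d * ((e⁻¹ : ℤ_[p]ˣ) : ℤ_[p]) - b) * e) := by
    linear_combination (-d) * e.inv_mul
  exact h ▸ (hb.mul_right _).neg_right

theorem exists_pow_succ_dvd_mul_one_add_pow_sub {n : ℕ} (hn : 1 ≤ n) {x y c : ℤ_[p]}
    (hx : IsUnit x) (hc : IsUnit c) (hxy : (p : ℤ_[p]) ^ n ∣ x - y) :
    ∃ b : ℕ, (p : ℤ_[p]) ^ (n + 1) ∣ x * (1 + p ^ n * c) ^ b - y := by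
  obtain ⟨d, hd⟩ := hxy
  obtain ⟨b, e, he⟩ := exists_nat_dvd_add_nat_mul d (hx.mul hc)
  obtain ⟨w, hw⟩ := sq_dvd_one_add_pow_sub ((p : ℤ_[p]) ^ n * c) b
  have hpow : ((p : ℤ_[p]) ^ n) ^ 2 = p ^ (n + 1) * p ^ (n - 1) := by
    rw [← pow_mul, ← pow_add]; congr 1; omega
  refine ⟨b, e + p ^ (n - 1) * (x * c ^ 2 * w), ?_⟩
  linear_combination hd + x * hw + (p : ℤ_[p]) ^ n * he + x * c ^ 2 * w * hpow

theorem exists_pow_dvd_sub_of_forall_pow_prime_pow_eq {x : ℤ_[p]} (hx : IsUnit x) {k : ℕ}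
    (hk : 1 ≤ k) (hxk : ∀ j, ∃ c, IsUnit c ∧ x ^ p ^ j = 1 + p ^ (k + j) * c)
    {v : ℤ_[p]} (hv : (p : ℤ_[p]) ^ k ∣ v - 1) (j : ℕ) :
    ∃ a : ℕ, (p : ℤ_[p]) ^ (k + j) ∣ x ^ a - v := by
  induction j with
  | zero => exact ⟨0, by rwa [pow_zero, dvd_sub_comm]⟩
  | succ j ih =>
    obtain ⟨a, ha⟩ := ih
    obtain ⟨c, hc, hxc⟩ := hxk j
    obtain ⟨b, hb⟩ := exists_pow_succ_dvd_mul_one_add_pow_sub (by omega) (hx.pow a) hc ha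
    exact ⟨a + p ^ j * b, by rw [pow_add x, pow_mul x, hxc]; exact hb⟩

theorem units_mem_closure_zpowers_of_forall_exists_pow_dvd_sub {u v : ℤ_[p]ˣ}
    (h : ∀ n : ℕ, ∃ a : ℕ, (p : ℤ_[p]) ^ n ∣ (u : ℤ_[p]) ^ a - v) :
    v ∈ closure (Subgroup.zpowers u : Set ℤ_[p]ˣ) := by
  rw [Units.isOpenEmbedding_val.isInducing.closure_eq_preimage_closure_image]
  refine mem_closure_of_forall_exists_pow_dvd_sub fun n => ?_
  obtain ⟨a, ha⟩ := h n
  exact ⟨_, ⟨u ^ a, Subgroup.npow_mem_zpowers u a, rfl⟩, by rwa [Units.val_pow_eq_pow_val]⟩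

end PadicInt

/-- let `p` be an odd prime and `ℓ` an integer with `ℓ ≡ 1 (mod p)`, `ℓ ≠ 1`,
and let `k ≥ 1` be the `p`-adic valuation of `ℓ - 1`.  Then `ℓ` is a unit in `ℤ_p`, and the
topological closure of the cyclic subgroup generated by `ℓ` in `ℤ_pˣ` is exactly the
subgroup `1 + p^k ℤ_p = {u ∈ ℤ_pˣ : u ≡ 1 mod p^k}`. -/
theorem closure_zpowers_eq_one_add_pow_smul (p : ℕ) [Fact p.Prime] (hodd : Odd p)
    (ℓ : ℤ) (hmod : ℓ ≡ 1 [ZMOD (p : ℤ)]) (hne : ℓ ≠ 1)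
    (k : ℕ) (hk : k = padicValInt p (ℓ - 1)) (hk1 : 1 ≤ k) :
    IsUnit ((ℓ : ℤ_[p])) ∧
      ∀ u : ℤ_[p]ˣ, (u : ℤ_[p]) = (ℓ : ℤ_[p]) →
        closure ((Subgroup.zpowers u : Subgroup ℤ_[p]ˣ) : Set ℤ_[p]ˣ) =
          {v : ℤ_[p]ˣ | ((p : ℤ_[p])) ^ k ∣ ((v : ℤ_[p]) - 1)} := by
  have hdvd : (p : ℤ) ∣ ℓ - 1 := hmod.symm.dvd
  have hℓ : ¬ (p : ℤ) ∣ ℓ := fun h =>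
    (Nat.prime_iff_prime_int.1 Fact.out).not_dvd_one (by simpa using dvd_sub h hdvd)
  refine ⟨PadicInt.isUnit_intCast_iff.2 hℓ, fun u hu => ?_⟩
  have hpow (j : ℕ) : ∃ c : ℤ_[p], IsUnit c ∧ (u : ℤ_[p]) ^ p ^ j = 1 + p ^ (k + j) * c := by
    obtain ⟨c, hc, hpc⟩ := Int.exists_pow_prime_pow_sub_one_eq_mul hodd hdvd hℓ hne j
    refine ⟨c, PadicInt.isUnit_intCast_iff.2 hpc, ?_⟩
    rw [hu, hk]
    exact_mod_cast sub_eq_iff_eq_add'.1 hc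
  set S := (Units.map (Ideal.Quotient.mk (Ideal.span {(p : ℤ_[p]) ^ k})).toMonoidHom).ker
  have hS : (S : Set ℤ_[p]ˣ) = {v : ℤ_[p]ˣ | (p : ℤ_[p]) ^ k ∣ (v : ℤ_[p]) - 1} := by
    simp only [S, Units.coe_ker_map_quotient_mk, Ideal.mem_span_singleton]
  have huS : u ∈ S := by
    obtain ⟨c, -, hc⟩ := hpow 0
    rw [← SetLike.mem_coe, hS]
    exact ⟨c, by simpa using sub_eq_of_eq_add' hc⟩
  rw [← hS]
  refine (closure_minimal (Subgroup.zpowers_le.2 huS) ?_).antisymm fun v hv => ?_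
  · exact hS ▸ (PadicInt.isClosed_setOf_pow_dvd_sub k 1).preimage Units.continuous_val
  · rw [hS] at hv
    refine PadicInt.units_mem_closure_zpowers_of_forall_exists_pow_dvd_sub fun n => ?_
    obtain ⟨a, ha⟩ := PadicInt.exists_pow_dvd_sub_of_forall_pow_prime_pow_eq u.isUnit hk1 hpow hv n
    exact ⟨a, (pow_dvd_pow _ (Nat.le_add_left n k)).trans ha⟩
end

section
/- Let ℓ and ℓ' be integers with ℓ ≡ 3 (mod 8) and ℓ' ≡ 7 (mod 8). Then both ℓ and ℓ' are units in ℤ_2, the quotients ℤ_2/(ℓ-1)ℤ_2 and ℤ_2/(ℓ'-1)ℤ_2 are both isomorphic to ℤ/2ℤ, but the topological closure of the cyclic subgroup generated by ℓ in ℤ_2ˣ and the topological closure of the cyclic subgroup generated by ℓ' in ℤ_2ˣ are distinct subgroups. (Thus for p = 2 the type of a tuple of primes is not determined by the associated groups W_i = ℤ_2/(ℓ_i - 1)ℤ_2.) -/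
open PadicInt

lemma isUnit_of_odd2 (n : ℤ) (h : ¬ (2:ℤ) ∣ n) : IsUnit ((n : ℤ_[2])) := by
  rw [PadicInt.isUnit_iff]
  refine le_antisymm (PadicInt.norm_le_one _) (not_lt.mp ?_)
  rw [PadicInt.norm_int_lt_one_iff_dvd]
  simpa using h

lemma quot_equiv_aux (a : ℤ_[2]) (m : ℤ) (hm : ¬ (2:ℤ) ∣ m) (ha : a = 2 * (m : ℤ_[2])) :
    Nonempty ((ℤ_[2] ⧸ Ideal.span {a}) ≃+ ZMod 2) := by
  have hmu := isUnit_of_odd2 m hm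
  have hspan : Ideal.span {a} = Ideal.span {(2:ℤ_[2])} := by
    rw [Ideal.span_singleton_eq_span_singleton]
    exact (Associated.symm ⟨hmu.unit, by rw [ha, IsUnit.unit_spec]⟩)
  have hker : Ideal.span {(2:ℤ_[2])} = RingHom.ker (PadicInt.toZMod : ℤ_[2] →+* ZMod 2) := by
    rw [PadicInt.ker_toZMod, PadicInt.maximalIdeal_eq_span_p]
    norm_num
  have hsurj : Function.Surjective (PadicInt.toZMod : ℤ_[2] →+* ZMod 2) := by
    intro z
    exact ⟨(z.val : ℤ_[2]), by rw [map_natCast]; exact ZMod.natCast_rightInverse z⟩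
  exact ⟨((Ideal.quotEquivOfEq (hspan.trans hker)).trans
    (RingHom.quotientKerEquivOfSurjective hsurj)).toAddEquiv⟩

lemma closed_fiber (c : ℤ_[2]) :
    IsClosed {y : ℤ_[2] | PadicInt.toZModPow 3 y = PadicInt.toZModPow 3 c} := by
  have h : {y : ℤ_[2] | PadicInt.toZModPow 3 y = PadicInt.toZModPow 3 c}
      = Metric.closedBall c (((2:ℕ):ℝ) ^ (-(3:ℕ) : ℤ)) := by
    ext y
    rw [Metric.mem_closedBall, dist_eq_norm, PadicInt.norm_le_pow_iff_mem_span_pow,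
      ← PadicInt.ker_toZModPow, RingHom.mem_ker, map_sub, sub_eq_zero]
    rfl
  rw [h]
  exact Metric.isClosed_closedBall

lemma closure_zpowers_sub (u : ℤ_[2]ˣ)
    (ha2 : PadicInt.toZModPow 3 (u : ℤ_[2]) * PadicInt.toZModPow 3 (u : ℤ_[2]) = 1) :
    ∀ x ∈ closure ((Subgroup.zpowers u : Subgroup ℤ_[2]ˣ) : Set ℤ_[2]ˣ),
      PadicInt.toZModPow 3 (x : ℤ_[2]) = 1 ∨
        PadicInt.toZModPow 3 (x : ℤ_[2]) = PadicInt.toZModPow 3 (u : ℤ_[2]) := by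
  set f := (PadicInt.toZModPow (p := 2) 3)
  set S : Set ℤ_[2]ˣ :=
    (Units.val) ⁻¹' ({y : ℤ_[2] | f y = f 1} ∪ {y : ℤ_[2] | f y = f (u : ℤ_[2])}) with hS
  have hclosed : IsClosed S :=
    (IsClosed.union (closed_fiber 1) (closed_fiber (u : ℤ_[2]))).preimage Units.continuous_val
  have hsub : ((Subgroup.zpowers u : Subgroup ℤ_[2]ˣ) : Set ℤ_[2]ˣ) ⊆ S := by
    rintro x ⟨n, rfl⟩
    show u ^ n ∈ S
    set g := Units.map f.toMonoidHom
    have hw : ∀ m : ℤ, g u ^ m = 1 ∨ g u ^ m = g u := by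
      have hsq : g u * g u = 1 := by
        ext
        push_cast [g]
        simpa using ha2
      intro m
      rcases Int.even_or_odd m with ⟨k, hk⟩ | ⟨k, hk⟩
      · left
        rw [hk, zpow_add, ← mul_zpow, hsq, one_zpow]
      · right
        rw [hk, two_mul, zpow_add, zpow_add, zpow_one, ← mul_zpow, hsq, one_zpow, one_mul]
    have key : f ((u ^ n : ℤ_[2]ˣ) : ℤ_[2]) = ((g u ^ n : (ZMod (2^3))ˣ) : ZMod (2^3)) := by
      rw [← map_zpow]
      rfl
    rcases hw n with h | h
    · exact Or.inl (by rw [map_one]; show f _ = _; rw [key, h, Units.val_one])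
    · exact Or.inr (show f _ = f _ by rw [key, h]; rfl)
  intro x hx
  have h2 := closure_minimal hsub hclosed hx
  rcases h2 with h | h
  · exact Or.inl (by rw [show f (x : ℤ_[2]) = f 1 from h, map_one])
  · exact Or.inr h

/-- let `ℓ ≡ 3 (mod 8)` and `ℓ' ≡ 7 (mod 8)` be integers.  Then `ℓ` and `ℓ'`
are units in `ℤ_2`, the quotients `ℤ_2/(ℓ-1)ℤ_2` and `ℤ_2/(ℓ'-1)ℤ_2` are both isomorphic
to `ℤ/2ℤ`, but the topological closures in `ℤ_2ˣ` of the cyclic subgroups generated by `ℓ`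
and by `ℓ'` are distinct. -/
theorem type_not_determined_by_W (ℓ ℓ' : ℤ)
    (hl : ℓ ≡ 3 [ZMOD (8 : ℤ)]) (hl' : ℓ' ≡ 7 [ZMOD (8 : ℤ)]) :
    IsUnit ((ℓ : ℤ_[2])) ∧ IsUnit ((ℓ' : ℤ_[2])) ∧
      Nonempty ((ℤ_[2] ⧸ Ideal.span {((ℓ : ℤ_[2]) - 1)}) ≃+ ZMod 2) ∧
      Nonempty ((ℤ_[2] ⧸ Ideal.span {((ℓ' : ℤ_[2]) - 1)}) ≃+ ZMod 2) ∧
      ∀ (u u' : ℤ_[2]ˣ), (u : ℤ_[2]) = (ℓ : ℤ_[2]) → (u' : ℤ_[2]) = (ℓ' : ℤ_[2]) →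
        closure ((Subgroup.zpowers u : Subgroup ℤ_[2]ˣ) : Set ℤ_[2]ˣ) ≠
          closure ((Subgroup.zpowers u' : Subgroup ℤ_[2]ˣ) : Set ℤ_[2]ˣ) := by
  obtain ⟨k, hk⟩ : (8:ℤ) ∣ 3 - ℓ := Int.ModEq.dvd hl
  obtain ⟨k', hk'⟩ : (8:ℤ) ∣ 7 - ℓ' := Int.ModEq.dvd hl'
  have hℓ : ℓ = 3 - 8 * k := by omega
  have hℓ' : ℓ' = 7 - 8 * k' := by omega
  refine ⟨isUnit_of_odd2 ℓ (by omega), isUnit_of_odd2 ℓ' (by omega), ?_, ?_, ?_⟩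
  · exact quot_equiv_aux _ (1 - 4 * k) (by omega) (by rw [hℓ]; push_cast; ring)
  · exact quot_equiv_aux _ (3 - 4 * k') (by omega) (by rw [hℓ']; push_cast; ring)
  · intro u u' hu hu' heq
    set f := (PadicInt.toZModPow (p := 2) 3) with hf
    have hfu : f (u : ℤ_[2]) = 3 := by
      rw [hu, hf, map_intCast]
      have : ((ℓ : ℤ) : ZMod (2^3)) = ((3 : ℤ) : ZMod (2^3)) :=
        (ZMod.intCast_eq_intCast_iff ℓ 3 (2^3)).mpr (by exact_mod_cast hl)
      simpa using this
    have hfu' : f (u' : ℤ_[2]) = 7 := by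
      rw [hu', hf, map_intCast]
      have : ((ℓ' : ℤ) : ZMod (2^3)) = ((7 : ℤ) : ZMod (2^3)) :=
        (ZMod.intCast_eq_intCast_iff ℓ' 7 (2^3)).mpr (by exact_mod_cast hl')
      simpa using this
    have hmem : u' ∈ closure ((Subgroup.zpowers u : Subgroup ℤ_[2]ˣ) : Set ℤ_[2]ˣ) := by
      rw [heq]
      exact subset_closure (Subgroup.mem_zpowers u')
    rcases closure_zpowers_sub u (by rw [hfu]; decide) u' hmem with h | h
    · rw [hfu'] at h; exact absurd h (by decide)
    · rw [hfu', hfu] at h; exact absurd h (by decide)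
end
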